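/- arXiv:0806.1948 — 11 statements merged into one kernel-verified Lean document; each statement's English description precedes it below -/
import Mathlib

section
/- Let X = (X_1,...,X_T) be a sequence of random variables over finite sets such that for every x in the support of X, the average (1/T)·Σ_{i=1}^T cp(X_i | X_{<i} = x_{<i}) ≤ α, where cp denotes collision probability. Then the collision probability of the whole sequence satisfies cp(X) ≤ α^T. -/
open Finset

/-!
By the chain rule, `p x = ∏ i, P(x_{≤i}) / P(x_{<i})` on the support. With
`D_i(x) = ∑ v, P(x_{<i}, v)^2`, split each squared factor as
`(P(x_{≤i})^2 / D_i(x)) * (D_i(x) / P(x_{<i})^2)`. The second factor is `cp(X_i | x_{<i})`, so by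
AM-GM the product of the second factors is at most `α^T`. The first factor depends only on `x_{≤i}`
and sums to at most `1` over `x_i`, so summing out the coordinates from the last to the first shows
that the products of the first factors have total sum at most `1`.
-/

theorem prod_le_pow_card_of_mean_le {ι : Type*} {s : Finset ι} {z : ι → ℝ} {α : ℝ}
    (hz : ∀ i ∈ s, 0 ≤ z i) (h : (1 / #s : ℝ) * ∑ i ∈ s, z i ≤ α) :
    ∏ i ∈ s, z i ≤ α ^ #s := by
  rcases s.eq_empty_or_nonempty with rfl | hs
  · simp
  have hcard : (#s : ℝ) ≠ 0 := by exact_mod_cast hs.card_pos.ne'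
  have amgm : ∏ i ∈ s, z i ^ (#s : ℝ)⁻¹ ≤ (1 / #s : ℝ) * ∑ i ∈ s, z i := by
    rw [one_div, mul_sum]
    exact Real.geom_mean_le_arith_mean_weighted s _ z (fun _ _ => by positivity)
      (by rw [sum_const, nsmul_eq_mul, mul_inv_cancel₀ hcard]) hz
  calc ∏ i ∈ s, z i = (∏ i ∈ s, z i ^ (#s : ℝ)⁻¹) ^ #s := by
        rw [← prod_pow]
        refine prod_congr rfl fun i hi => ?_
        rw [← Real.rpow_natCast, ← Real.rpow_mul (hz i hi), inv_mul_cancel₀ hcard, Real.rpow_one]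
    _ ≤ α ^ #s :=
        pow_le_pow_left₀ (prod_nonneg fun i hi => Real.rpow_nonneg (hz i hi) _) (amgm.trans h) _

section UpdateSums

variable {ι : Type*} [Fintype ι] [DecidableEq ι] {β : ι → Type*} [∀ i, Fintype (β i)]

theorem sum_sum_update_eq_card_mul (κ : ι) (F : (∀ i, β i) → ℝ) :
    ∑ x, ∑ v, F (Function.update x κ v) = Fintype.card (β κ) * ∑ x, F x := by
  have swap : Function.Involutive fun z : (∀ i, β i) × β κ => (Function.update z.1 κ z.2, z.1 κ) :=
    fun z => Prod.ext (by simp) (by simp)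
  calc ∑ x, ∑ v, F (Function.update x κ v)
      = ∑ z : (∀ i, β i) × β κ, F (Function.update z.1 κ z.2) := by rw [Fintype.sum_prod_type]
    _ = ∑ z : (∀ i, β i) × β κ, F z.1 := Fintype.sum_bijective _ swap.bijective _ _ fun _ => rfl
    _ = Fintype.card (β κ) * ∑ x, F x := by
        rw [Fintype.sum_prod_type]; simp [mul_sum]

theorem card_mul_sum_mul_le_sum (κ : ι) {F G : (∀ i, β i) → ℝ} (hF0 : ∀ x, 0 ≤ F x)
    (hF : ∀ x v, F (Function.update x κ v) = F x)
    (hG : ∀ x, ∑ v, G (Function.update x κ v) ≤ 1) :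
    Fintype.card (β κ) * ∑ x, F x * G x ≤ ∑ x, F x := by
  rw [← sum_sum_update_eq_card_mul]
  calc ∑ x, ∑ v, F (Function.update x κ v) * G (Function.update x κ v)
      = ∑ x, F x * ∑ v, G (Function.update x κ v) := by simp_rw [hF, mul_sum]
    _ ≤ ∑ x, F x * 1 := sum_le_sum fun x _ => mul_le_mul_of_nonneg_left (hG x) (hF0 x)
    _ = ∑ x, F x := by simp_rw [mul_one]

end UpdateSums

theorem sum_prod_le_one {ι : Type*} [Fintype ι] [LinearOrder ι] {β : ι → Type*}
    [∀ i, Fintype (β i)] [∀ i, Nonempty (β i)] (g : ι → (∀ i, β i) → ℝ)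
    (hg0 : ∀ i x, 0 ≤ g i x)
    (hg_update : ∀ i j, i < j → ∀ x v, g i (Function.update x j v) = g i x)
    (hg_sum : ∀ i x, ∑ v, g i (Function.update x i v) ≤ 1) :
    ∑ x, ∏ i, g i x ≤ 1 := by
  have key : ∀ s : Finset ι, (∏ i ∈ s, (Fintype.card (β i) : ℝ)) * ∑ x, ∏ i ∈ s, g i x ≤
      ∏ i, (Fintype.card (β i) : ℝ) := by
    intro s
    induction s using Finset.induction_on_max with
    | empty => simp [Fintype.card_pi]
    | insert a s hlt ih =>
      have ha : a ∉ s := fun h => lt_irrefl a (hlt a h)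
      have step := card_mul_sum_mul_le_sum a (F := fun x => ∏ i ∈ s, g i x) (G := g a)
        (fun x => prod_nonneg fun i _ => hg0 i x)
        (fun x v => prod_congr rfl fun i hi => hg_update i a (hlt i hi) x v) (hg_sum a)
      simp_rw [prod_insert ha, mul_comm (g a _)]
      calc _ = (∏ i ∈ s, (Fintype.card (β i) : ℝ)) *
            (Fintype.card (β a) * ∑ x, (∏ i ∈ s, g i x) * g a x) := by ring
        _ ≤ _ := (mul_le_mul_of_nonneg_left step (by positivity)).trans ih
  have hpos : 0 < ∏ i, (Fintype.card (β i) : ℝ) :=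
    prod_pos fun i _ => by exact_mod_cast Fintype.card_pos
  exact le_of_mul_le_mul_left (by simpa using key univ) hpos

section Cylinder

variable {T : ℕ} {β : Fin T → Type*} [∀ i, Fintype (β i)] [∀ i, DecidableEq (β i)]

/-- `Pr[X_{<k} = x_{<k}]`, indexed by `k : ℕ` so that the prefixes `k = 0, …, T` telescope. -/
noncomputable def cylinderMass (p : (∀ i, β i) → ℝ) (x : ∀ i, β i) (k : ℕ) : ℝ :=
  ∑ y, if ∀ j : Fin T, (j : ℕ) < k → y j = x j then p y else 0

/-- `cp(X_i | X_{<i} = x_{<i})`. -/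
noncomputable def condCollisionProb (p : (∀ i, β i) → ℝ) (i : Fin T) (x : ∀ i, β i) : ℝ :=
  (∑ v, cylinderMass p (Function.update x i v) (i + 1) ^ 2) / cylinderMass p x i ^ 2

noncomputable def collisionWeight (p : (∀ i, β i) → ℝ) (i : Fin T) (x : ∀ i, β i) : ℝ :=
  cylinderMass p x (i + 1) ^ 2 / ∑ v, cylinderMass p (Function.update x i v) (i + 1) ^ 2

variable {p : (∀ i, β i) → ℝ}

theorem cylinderMass_zero (hp1 : ∑ x, p x = 1) (x : ∀ i, β i) : cylinderMass p x 0 = 1 := by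
  simpa [cylinderMass] using hp1

theorem cylinderMass_self (x : ∀ i, β i) : cylinderMass p x T = p x := by
  have hcyl : ∀ y : ∀ i, β i, (∀ j : Fin T, (j : ℕ) < T → y j = x j) ↔ y = x :=
    fun y => ⟨fun hy => funext fun j => hy j j.isLt, fun hy j _ => by rw [hy]⟩
  simp only [cylinderMass, hcyl]
  simp

theorem le_cylinderMass (hp0 : ∀ x, 0 ≤ p x) (x : ∀ i, β i) (k : ℕ) : p x ≤ cylinderMass p x k := by
  have := single_le_sum (f := fun y => if ∀ j : Fin T, (j : ℕ) < k → y j = x j then p y else 0)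
    (fun y _ => by split_ifs; exacts [hp0 y, le_rfl]) (mem_univ x)
  simpa [cylinderMass] using this

theorem cylinderMass_update_of_le {k : ℕ} {j : Fin T} (hkj : k ≤ j) (x : ∀ i, β i) (v : β j) :
    cylinderMass p (Function.update x j v) k = cylinderMass p x k := by
  unfold cylinderMass
  refine sum_congr rfl fun y _ =>
    if_congr (forall_congr' fun l => imp_congr_right fun hl => ?_) rfl rfl
  rw [Function.update_of_ne (by rintro rfl; omega)]

theorem cylinderMass_update_succ (x : ∀ i, β i) (i : Fin T) (v : β i) :
    cylinderMass p (Function.update x i v) (i + 1) =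
      ∑ y, if (∀ j, j < i → y j = x j) ∧ y i = v then p y else 0 := by
  unfold cylinderMass
  refine sum_congr rfl fun y _ => if_congr ⟨fun h => ⟨fun j hj => ?_, ?_⟩, fun h j hj => ?_⟩ rfl rfl
  · simpa [Function.update_of_ne hj.ne] using h j (by omega)
  · simpa using h i (by omega)
  · rcases (Nat.lt_succ_iff_lt_or_eq.mp hj) with hj | hj
    · simpa [Function.update_of_ne (Fin.ne_of_lt hj)] using h.1 j hj
    · obtain rfl := Fin.ext hj
      simpa using h.2

theorem prod_cylinderMass_div (hp0 : ∀ x, 0 ≤ p x) (hp1 : ∑ x, p x = 1) {x : ∀ i, β i}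
    (hx : p x ≠ 0) : ∏ i : Fin T, cylinderMass p x (i + 1) / cylinderMass p x i = p x := by
  have hpos : ∀ k, 0 < cylinderMass p x k :=
    fun k => ((hp0 x).lt_of_ne' hx).trans_le (le_cylinderMass hp0 x k)
  rw [Fin.prod_univ_eq_prod_range (fun k => cylinderMass p x (k + 1) / cylinderMass p x k)]
  refine (prod_range_induction _ _ (cylinderMass_zero hp1 x) T fun k _ => ?_).trans
    (cylinderMass_self x)
  rw [mul_div_cancel₀ _ (hpos k).ne']

theorem collisionWeight_nonneg (i : Fin T) (x : ∀ i, β i) : 0 ≤ collisionWeight p i x := by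
  unfold collisionWeight
  positivity

theorem condCollisionProb_nonneg (i : Fin T) (x : ∀ i, β i) : 0 ≤ condCollisionProb p i x := by
  unfold condCollisionProb
  positivity

theorem collisionWeight_update_of_lt {i j : Fin T} (hij : i < j) (x : ∀ i, β i) (v : β j) :
    collisionWeight p i (Function.update x j v) = collisionWeight p i x := by
  have hle : (i : ℕ) + 1 ≤ j := hij
  unfold collisionWeight
  simp_rw [Function.update_comm hij.ne', cylinderMass_update_of_le hle]

theorem sum_collisionWeight_update_le_one (i : Fin T) (x : ∀ i, β i) :
    ∑ v, collisionWeight p i (Function.update x i v) ≤ 1 := by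
  simp only [collisionWeight, Function.update_idem, ← sum_div]
  exact div_self_le_one _

theorem sq_eq_prod_collisionWeight_mul_prod_condCollisionProb (hp0 : ∀ x, 0 ≤ p x)
    (hp1 : ∑ x, p x = 1) {x : ∀ i, β i} (hx : p x ≠ 0) :
    p x ^ 2 = (∏ i, collisionWeight p i x) * ∏ i, condCollisionProb p i x := by
  rw [← prod_cylinderMass_div hp0 hp1 hx, ← prod_pow, ← prod_mul_distrib]
  refine prod_congr rfl fun i _ => ?_
  have hV : 0 < cylinderMass p x (i + 1) :=
    ((hp0 x).lt_of_ne' hx).trans_le (le_cylinderMass hp0 x _)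
  have hD : cylinderMass p x (i + 1) ^ 2 ≤
      ∑ v, cylinderMass p (Function.update x i v) (i + 1) ^ 2 := by
    simpa using single_le_sum (f := fun v => cylinderMass p (Function.update x i v) (i + 1) ^ 2)
      (fun _ _ => sq_nonneg _) (mem_univ (x i))
  have hD0 : (∑ v, cylinderMass p (Function.update x i v) (i + 1) ^ 2) ≠ 0 :=
    ((pow_pos hV 2).trans_le hD).ne'
  unfold collisionWeight condCollisionProb
  field_simp

theorem sq_le_pow_mul_prod_collisionWeight (hp0 : ∀ x, 0 ≤ p x) (hp1 : ∑ x, p x = 1) {α : ℝ}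
    (hα : 0 ≤ α) {x : ∀ i, β i}
    (hcp : p x ≠ 0 → (1 / T : ℝ) * ∑ i, condCollisionProb p i x ≤ α) :
    p x ^ 2 ≤ α ^ T * ∏ i, collisionWeight p i x := by
  have hw : 0 ≤ ∏ i, collisionWeight p i x := prod_nonneg fun i _ => collisionWeight_nonneg i x
  by_cases hx : p x = 0
  · simpa [hx] using mul_nonneg (pow_nonneg hα T) hw
  rw [sq_eq_prod_collisionWeight_mul_prod_condCollisionProb hp0 hp1 hx, mul_comm]
  refine mul_le_mul_of_nonneg_right ?_ hw
  simpa using prod_le_pow_card_of_mean_le (s := univ) (fun i _ => condCollisionProb_nonneg i x)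
    (by simpa using hcp hx)

theorem sum_prod_collisionWeight_le_one [∀ i, Nonempty (β i)] :
    ∑ x, ∏ i, collisionWeight p i x ≤ 1 :=
  sum_prod_le_one _ collisionWeight_nonneg (fun _ _ hij => collisionWeight_update_of_lt hij)
    sum_collisionWeight_update_le_one

end Cylinder

theorem stmt0_general {T : ℕ} (β : Fin T → Type) [∀ i, Fintype (β i)]
    [∀ i, DecidableEq (β i)]
    (p : (∀ i, β i) → ℝ) (hp0 : ∀ x, 0 ≤ p x) (hp1 : ∑ x, p x = 1)
    (α : ℝ)
    -- `margLt i x` = Pr[X_{<i} = x_{<i}]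
    (margLt : Fin T → (∀ i, β i) → ℝ)
    (hmargLt : ∀ i x, margLt i x =
      ∑ y, if (∀ j, j < i → y j = x j) then p y else 0)
    -- `margLeVal i x v` = Pr[X_{<i} = x_{<i} ∧ X_i = v]
    (margLeVal : (i : Fin T) → (∀ j, β j) → β i → ℝ)
    (hmargLeVal : ∀ i x v, margLeVal i x v =
      ∑ y, if (∀ j, j < i → y j = x j) ∧ y i = v then p y else 0)
    -- average conditional collision probability bound on the support
    (hcond : ∀ x, p x ≠ 0 →
      (1 / T : ℝ) * ∑ i, (∑ v, (margLeVal i x v) ^ 2) / (margLt i x) ^ 2 ≤ α) :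
    ∑ x, (p x) ^ 2 ≤ α ^ T := by
  have hL : ∀ i x, margLt i x = cylinderMass p x i := hmargLt
  have hV : ∀ i x v, margLeVal i x v = cylinderMass p (Function.update x i v) (i + 1) :=
    fun i x v => (hmargLeVal i x v).trans (cylinderMass_update_succ x i v).symm
  simp only [hL, hV] at hcond
  obtain ⟨x₀, hx₀⟩ : ∃ x, p x ≠ 0 := by
    by_contra! h
    simp [h] at hp1
  have : ∀ i, Nonempty (β i) := fun i => ⟨x₀ i⟩
  have hα : 0 ≤ α := (hcond x₀ hx₀).trans' <|
    mul_nonneg (by positivity) (sum_nonneg fun i _ => condCollisionProb_nonneg i x₀)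
  calc ∑ x, p x ^ 2 ≤ ∑ x, α ^ T * ∏ i, collisionWeight p i x :=
        sum_le_sum fun x _ => sq_le_pow_mul_prod_collisionWeight hp0 hp1 hα (hcond x)
    _ = α ^ T * ∑ x, ∏ i, collisionWeight p i x := (mul_sum ..).symm
    _ ≤ α ^ T := mul_le_of_le_one_right (by positivity) sum_prod_collisionWeight_le_one

/-- If for every `x` in the support of the joint distribution `p` of
`(X_1,...,X_T)` the average conditional collision probability
`(1/T) ∑ i, cp(X_i | X_{<i} = x_{<i})` is at most `α`, then `cp(X) ≤ α^T`. -/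
theorem stmt0 {T : ℕ} (hT : 0 < T) (β : Fin T → Type) [∀ i, Fintype (β i)]
    [∀ i, DecidableEq (β i)]
    (p : (∀ i, β i) → ℝ) (hp0 : ∀ x, 0 ≤ p x) (hp1 : ∑ x, p x = 1)
    (α : ℝ)
    -- `margLt i x` = Pr[X_{<i} = x_{<i}]
    (margLt : Fin T → (∀ i, β i) → ℝ)
    (hmargLt : ∀ i x, margLt i x =
      ∑ y, if (∀ j, j < i → y j = x j) then p y else 0)
    -- `margLeVal i x v` = Pr[X_{<i} = x_{<i} ∧ X_i = v]
    (margLeVal : (i : Fin T) → (∀ j, β j) → β i → ℝ)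
    (hmargLeVal : ∀ i x v, margLeVal i x v =
      ∑ y, if (∀ j, j < i → y j = x j) ∧ y i = v then p y else 0)
    -- average conditional collision probability bound on the support
    (hcond : ∀ x, p x ≠ 0 →
      (1 / T : ℝ) * ∑ i, (∑ v, (margLeVal i x v) ^ 2) / (margLt i x) ^ 2 ≤ α) :
    ∑ x, (p x) ^ 2 ≤ α ^ T :=
  stmt0_general β p hp0 hp1 α margLt hmargLt margLeVal hmargLeVal hcond
end

section
/- (Leftover Hash Lemma, collision version.) Let H be a uniformly random hash function from a 2-universal family of functions from [N] to [M], and let X be a random variable over [N], independent of H, with cp(X) ≤ 1/K. Then the conditional collision probability satisfies cp(H(X)|H) ≤ 1/M + 1/K. -/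
open Finset

/-- Leftover Hash Lemma, collision version: for a random hash
function `H` from a 2-universal family and `X` with `cp(X) ≤ 1/K`,
`cp(H(X)|H) ≤ 1/M + 1/K`. -/
theorem stmt3 {N M : ℕ} (hM : 0 < M) {Hfam : Type} [Fintype Hfam] [Nonempty Hfam]
    (hash : Hfam → Fin N → Fin M)
    (huniv : ∀ x x' : Fin N, x ≠ x' →
      (∑ hh : Hfam, if hash hh x = hash hh x' then (1 : ℝ) else 0)
        / Fintype.card Hfam ≤ 1 / M)
    (K : ℝ) (hK : 0 < K)
    (p : Fin N → ℝ) (hp0 : ∀ x, 0 ≤ p x) (hp1 : ∑ x, p x = 1)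
    (hcp : ∑ x, (p x) ^ 2 ≤ 1 / K) :
    (1 / Fintype.card Hfam : ℝ) *
      ∑ hh : Hfam, ∑ y : Fin M, (∑ x, if hash hh x = y then p x else 0) ^ 2
      ≤ 1 / M + 1 / K := by
  have hcpos : (0:ℝ) < (Fintype.card Hfam : ℝ) := by
    exact_mod_cast Fintype.card_pos
  have key : ∀ hh : Hfam, ∑ y : Fin M, (∑ x, if hash hh x = y then p x else 0) ^ 2
      = ∑ x, ∑ x', if hash hh x = hash hh x' then p x * p x' else 0 := by
    intro hh
    simp_rw [sq, Finset.sum_mul_sum, ite_mul, mul_ite, zero_mul, mul_zero]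
    rw [Finset.sum_comm]
    refine Finset.sum_congr rfl fun x _ => ?_
    rw [Finset.sum_comm]
    refine Finset.sum_congr rfl fun x' _ => ?_
    simp [Finset.sum_ite_eq, eq_comm]
  simp_rw [key]
  -- split diagonal and off-diagonal
  have split : ∀ hh : Hfam,
      ∑ x, ∑ x', (if hash hh x = hash hh x' then p x * p x' else 0)
      = (∑ x, (p x)^2) + ∑ x, ∑ x' ∈ univ \ {x},
          (if hash hh x = hash hh x' then p x * p x' else 0) := by
    intro hh
    rw [← Finset.sum_add_distrib]
    refine Finset.sum_congr rfl fun x _ => ?_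
    rw [Finset.sum_eq_sum_sdiff_singleton_add (Finset.mem_univ x)]
    simp [sq]
  simp_rw [split, Finset.sum_add_distrib]
  rw [Finset.sum_const, mul_add, add_comm (1/(M:ℝ))]
  have h1 : (1 / (Fintype.card Hfam : ℝ)) * (Fintype.card Hfam • ∑ x, (p x)^2) ≤ 1/K := by
    rw [nsmul_eq_mul]
    rw [one_div, inv_mul_cancel_left₀ (ne_of_gt hcpos)]
    exact hcp
  have h2 : (1 / (Fintype.card Hfam : ℝ)) *
      (∑ hh : Hfam, ∑ x, ∑ x' ∈ univ \ {x},
        (if hash hh x = hash hh x' then p x * p x' else 0)) ≤ 1/M := by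
    rw [Finset.sum_comm]
    have swap : ∀ x : Fin N, ∑ hh : Hfam, ∑ x' ∈ univ \ {x},
        (if hash hh x = hash hh x' then p x * p x' else 0)
        = ∑ x' ∈ univ \ {x}, (p x * p x') *
            ∑ hh : Hfam, (if hash hh x = hash hh x' then (1:ℝ) else 0) := by
      intro x
      rw [Finset.sum_comm]
      refine Finset.sum_congr rfl fun x' _ => ?_
      rw [Finset.mul_sum]
      refine Finset.sum_congr rfl fun hh _ => ?_
      split <;> simp
    simp_rw [swap]
    rw [mul_comm, mul_one_div]
    calc (∑ x, ∑ x' ∈ univ \ {x}, p x * p x' *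
            ∑ hh : Hfam, (if hash hh x = hash hh x' then (1:ℝ) else 0))
          / (Fintype.card Hfam : ℝ)
        = ∑ x, ∑ x' ∈ univ \ {x}, (p x * p x') *
            ((∑ hh : Hfam, (if hash hh x = hash hh x' then (1:ℝ) else 0))
              / (Fintype.card Hfam : ℝ)) := by
          rw [Finset.sum_div]
          refine Finset.sum_congr rfl fun x _ => ?_
          rw [Finset.sum_div]
          exact Finset.sum_congr rfl fun x' _ => mul_div_assoc _ _ _
      _ ≤ ∑ x, ∑ x' ∈ univ \ {x}, (p x * p x') * (1 / M) := by
          refine Finset.sum_le_sum fun x _ => Finset.sum_le_sum fun x' hx' => ?_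
          have hne : x ≠ x' := by
            simp only [Finset.mem_sdiff, Finset.mem_singleton] at hx'
            exact fun h => hx'.2 h.symm
          exact mul_le_mul_of_nonneg_left (huniv x x' hne)
            (mul_nonneg (hp0 x) (hp0 x'))
      _ ≤ 1 / M := by
          have : ∑ x, ∑ x' ∈ univ \ {x}, (p x * p x') * (1 / M)
              = (∑ x, ∑ x' ∈ univ \ {x}, p x * p x') * (1/M) := by
            rw [Finset.sum_mul]
            exact Finset.sum_congr rfl fun x _ => (Finset.sum_mul _ _ _).symm
          rw [this]
          have hle : (∑ x, ∑ x' ∈ univ \ {x}, p x * p x') ≤ 1 := by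
            calc ∑ x, ∑ x' ∈ univ \ {x}, p x * p x'
                ≤ ∑ x, ∑ x' : Fin N, p x * p x' := by
                  refine Finset.sum_le_sum fun x _ => ?_
                  refine Finset.sum_le_sum_of_subset_of_nonneg
                    (Finset.sdiff_subset) fun x' _ _ =>
                    mul_nonneg (hp0 x) (hp0 x')
              _ = 1 := by rw [← Finset.sum_mul_sum, hp1, one_mul]
          nlinarith [one_div_pos.mpr (show (0:ℝ) < M by exact_mod_cast hM)]
  simp only [Finset.card_univ] at *
  linarith
end

section
/- Let X be a random variable over [M] with cp(X) ≤ α/M. Then the Hellinger closeness to uniform satisfies C(X) = (1/M)·Σ_{x∈[M]} √(M·Pr[X=x]) ≥ √(1/α). -/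
open Finset

/-- If `cp(X) ≤ α/M` then the Hellinger closeness to uniform
`C(X) = (1/M) ∑ x, √(M·Pr[X=x])` is at least `√(1/α)`. -/
theorem stmt5 {M : ℕ} (α : ℝ)
    (p : Fin M → ℝ) (hp0 : ∀ x, 0 ≤ p x) (hp1 : ∑ x, p x = 1)
    (hcp : ∑ x, (p x) ^ 2 ≤ α / M) :
    Real.sqrt (1 / α) ≤ (1 / M : ℝ) * ∑ x, Real.sqrt (M * p x) := by
  have hM : 0 < M := by
    rcases Nat.eq_zero_or_pos M with h | h
    · subst h; simp at hp1
    · exact h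
  have hMR : (0:ℝ) < M := by exact_mod_cast hM
  set S := ∑ x, Real.sqrt (p x) with hSdef
  set Q := ∑ x, (p x) ^ 2 with hQdef
  have hS0 : 0 ≤ S := Finset.sum_nonneg fun i _ => Real.sqrt_nonneg _
  -- Q > 0
  have hQ0 : 0 < Q := by
    have hlt : ∑ x : Fin M, (0:ℝ) < ∑ x, p x := by rw [hp1]; simp
    obtain ⟨x, -, hx⟩ := Finset.exists_lt_of_sum_lt hlt
    exact lt_of_lt_of_le (by positivity)
      (Finset.single_le_sum (fun i _ => sq_nonneg (p i)) (Finset.mem_univ x))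
  have hα : 0 < α := by
    have : (0:ℝ) < α / M := lt_of_lt_of_le hQ0 hcp
    rcases div_pos_iff.mp this with ⟨h1, -⟩ | ⟨-, h2⟩
    · exact h1
    · linarith
  -- Step B: 1 ≤ S * T where T = ∑ √p · p
  set T := ∑ x, Real.sqrt (p x) * p x with hTdef
  have hB : 1 ≤ S * T := by
    have key := sum_sq_le_sum_mul_sum_of_sq_eq_mul (Finset.univ : Finset (Fin M))
      (r := p) (f := fun x => Real.sqrt (p x)) (g := fun x => Real.sqrt (p x) * p x)
      (fun i _ => Real.sqrt_nonneg _)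
      (fun i _ => mul_nonneg (Real.sqrt_nonneg _) (hp0 i))
      (fun i _ => by
        have : Real.sqrt (p i) * Real.sqrt (p i) = p i := Real.mul_self_sqrt (hp0 i)
        ring_nf
        nlinarith [this])
    rw [hp1, one_pow] at key
    exact key
  -- Step A: T ≤ √Q
  have hA : T ≤ Real.sqrt Q := by
    have key := Real.sum_mul_le_sqrt_mul_sqrt (Finset.univ : Finset (Fin M))
      (fun x => Real.sqrt (p x)) p
    have h1 : ∑ x : Fin M, (Real.sqrt (p x)) ^ 2 = 1 := by
      rw [← hp1]; exact Finset.sum_congr rfl fun i _ => Real.sq_sqrt (hp0 i)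
    rw [h1, Real.sqrt_one, one_mul] at key
    exact key
  -- hence S ≥ 1/√Q
  have hsqQ : 0 < Real.sqrt Q := Real.sqrt_pos.mpr hQ0
  have hSQ : 1 / Real.sqrt Q ≤ S := by
    rw [div_le_iff₀ hsqQ]
    calc (1:ℝ) ≤ S * T := hB
      _ ≤ S * Real.sqrt Q := by exact mul_le_mul_of_nonneg_left hA hS0
  -- √(M/α) = 1/√(α/M) ≤ 1/√Q ≤ S
  have hQle : Real.sqrt Q ≤ Real.sqrt (α / M) := Real.sqrt_le_sqrt hcp
  have hMα : Real.sqrt (M / α) ≤ S := by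
    have h1 : Real.sqrt (M / α) = 1 / Real.sqrt (α / M) := by
      rw [one_div, ← Real.sqrt_inv]
      congr 1
      field_simp
    rw [h1]
    refine le_trans (by gcongr) hSQ
  -- conclude
  have hsum : ∑ x, Real.sqrt (M * p x) = Real.sqrt M * S := by
    rw [Finset.mul_sum]
    exact Finset.sum_congr rfl fun i _ => Real.sqrt_mul (le_of_lt hMR) _
  rw [hsum]
  have hsqM : 0 < Real.sqrt M := Real.sqrt_pos.mpr hMR
  have hmss : Real.sqrt M * Real.sqrt M = (M:ℝ) := Real.mul_self_sqrt hMR.le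
  have hre : (1 / M : ℝ) * (Real.sqrt M * S) = S / Real.sqrt M := by
    rw [eq_div_iff (ne_of_gt hsqM)]
    field_simp
    nlinarith [hmss]
  rw [hre, le_div_iff₀ hsqM]
  calc Real.sqrt (1 / α) * Real.sqrt M = Real.sqrt ((1 / α) * M) :=
        (Real.sqrt_mul (by positivity) _).symm
    _ = Real.sqrt (M / α) := by rw [one_div_mul_eq_div]
    _ ≤ S := hMα
end

section
/- Let H:[N]→[M] be a uniformly random hash function from a 2-universal family 𝓗, and let X = (X_1,...,X_T) be a block K-source over [N]^T, independent of H, with K > MT/ε² for some ε > 0. Then the joint distribution (H, H(X_1),...,H(X_T)) is ε-close in statistical distance to (H, U_{[M]^T}), where U_{[M]^T} is uniform on [M]^T and independent of H. -/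
/-!
Let `Sᵢ` be the average over `h ∈ 𝓗` of the Shannon entropy of `(h(X_1), …, h(X_i))`.
Applying `log x ≤ x - 1` fibrewise, appending the block `h(X_{i+1})` raises the entropy by at
least `log M + 1 - M·c`, where `c` is the expected collision probability of `h(X_{i+1})` given
`h(X_{≤i})`. Conditioning on the finer `X_{≤i}` can only increase `c` (Cauchy–Schwarz), and
then 2-universality and the block-source property give `c ≤ 1/K + 1/M` on average over `h`.
Hence `S_T ≥ T (log M - M/K)`, so the KL divergence of `(H, H(X))` from `(H, U)` is at most
`TM/K`, and the Hellinger bound `(∑ |P - Q|)² ≤ 4 KL(P ‖ Q)` gives statistical distance at most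
`√(TM/K) < ε`.
-/

open Finset Real

lemma sq_sum_div_le_sum_sq_div_of_nonneg {ι : Type*} (s : Finset ι) {u v : ι → ℝ}
    (hv : ∀ i ∈ s, 0 ≤ v i) (huv : ∀ i ∈ s, v i = 0 → u i = 0) :
    (∑ i ∈ s, u i) ^ 2 / ∑ i ∈ s, v i ≤ ∑ i ∈ s, u i ^ 2 / v i := by
  have hpos : ∀ i ∈ s, v i ≠ 0 → 0 < v i := fun i hi h => (hv i hi).lt_of_ne' h
  rw [← sum_filter_of_ne (p := fun i => 0 < v i) fun i hi hu => hpos i hi fun h => hu (huv i hi h),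
    ← sum_filter_of_ne (p := fun i => 0 < v i) hpos,
    ← sum_filter_of_ne (p := fun i => 0 < v i) (f := fun i => u i ^ 2 / v i)
      fun i hi h => hpos i hi (div_ne_zero_iff.1 h).2]
  exact sq_sum_div_le_sum_sq_div _ _ fun i hi => (mem_filter.1 hi).2

lemma le_negMulLog {a c : ℝ} (ha : 0 ≤ a) (hc : 0 < c) :
    a - a ^ 2 / c - a * log c ≤ negMulLog a := by
  rcases ha.eq_or_lt with rfl | ha
  · simp
  have h := log_le_sub_one_of_pos (div_pos ha hc)
  rw [log_div ha.ne' hc.ne'] at h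
  have h' : a * (a / c) = a ^ 2 / c := by ring
  rw [negMulLog]
  nlinarith [mul_le_mul_of_nonneg_left h ha.le]

lemma le_sum_negMulLog {β : Type*} [Fintype β] (A : β → ℝ) (hA : ∀ b, 0 ≤ A b) :
    negMulLog (∑ b, A b) + (∑ b, A b) * (log (Fintype.card β) + 1)
        - Fintype.card β * ∑ b, A b ^ 2 / ∑ b, A b ≤ ∑ b, negMulLog (A b) := by
  obtain ⟨S, hSdef⟩ : ∃ S, ∑ b, A b = S := ⟨_, rfl⟩
  rw [hSdef]
  rcases (hSdef ▸ sum_nonneg fun b _ => hA b : 0 ≤ S).eq_or_lt with rfl | hS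
  · have hA0 : ∀ b, A b = 0 := fun b =>
      (sum_eq_zero_iff_of_nonneg fun b _ => hA b).1 hSdef b (mem_univ b)
    simp [hA0]
  obtain ⟨b₀, -, -⟩ := exists_ne_zero_of_sum_ne_zero (hSdef ▸ hS.ne')
  have hM : (0 : ℝ) < Fintype.card β := by
    have : Nonempty β := ⟨b₀⟩
    exact_mod_cast Fintype.card_pos
  have hc : 0 < S / Fintype.card β := div_pos hS hM
  calc negMulLog S + S * (log (Fintype.card β) + 1) - Fintype.card β * ∑ b, A b ^ 2 / S
      = S - Fintype.card β * ∑ b, A b ^ 2 / S - S * log (S / Fintype.card β) := by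
        rw [log_div hS.ne' hM.ne', negMulLog]
        ring
    _ = ∑ b, (A b - A b ^ 2 / (S / Fintype.card β) - A b * log (S / Fintype.card β)) := by
        rw [sum_sub_distrib, sum_sub_distrib, ← sum_mul, mul_sum, hSdef]
        congr 2
        exact sum_congr rfl fun b _ => by field_simp
    _ ≤ ∑ b, negMulLog (A b) := sum_le_sum fun b _ => le_negMulLog (hA b) hc

lemma sq_sqrt_sub_sqrt_le {p q : ℝ} (hp : 0 ≤ p) (hq : 0 < q) :
    (√p - √q) ^ 2 ≤ p * log p - p * log q - p + q := by
  rcases hp.eq_or_lt with rfl | hp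
  · simp [sq_sqrt hq.le]
  have hs : 0 < √p := sqrt_pos.2 hp
  have ht : 0 < √q := sqrt_pos.2 hq
  have h := one_sub_inv_le_log_of_pos (div_pos hs ht)
  rw [inv_div, log_div hs.ne' ht.ne'] at h
  have key : √p ^ 2 * (1 - √q / √p) = √p ^ 2 - √p * √q := by field_simp
  conv_rhs => rw [← sq_sqrt hp.le, ← sq_sqrt hq.le, log_pow, log_pow]
  push_cast
  nlinarith [mul_le_mul_of_nonneg_left h (sq_nonneg √p)]

lemma sq_sum_abs_sub_le {ι : Type*} [Fintype ι] {P Q : ι → ℝ} (hP : ∀ i, 0 ≤ P i)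
    (hQ : ∀ i, 0 < Q i) (hP1 : ∑ i, P i = 1) (hQ1 : ∑ i, Q i = 1) :
    (∑ i, |P i - Q i|) ^ 2 ≤ 4 * ∑ i, (P i * log (P i) - P i * log (Q i)) := by
  have hP2 i : √(P i) ^ 2 = P i := sq_sqrt (hP i)
  have hQ2 i : √(Q i) ^ 2 = Q i := sq_sqrt (hQ i).le
  have habs i : |P i - Q i| = |√(P i) - √(Q i)| * (√(P i) + √(Q i)) := by
    rw [← abs_of_nonneg (by positivity : 0 ≤ √(P i) + √(Q i)), ← abs_mul]
    congr 1
    linear_combination hQ2 i - hP2 i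
  have hhell : ∑ i, |√(P i) - √(Q i)| ^ 2 ≤ ∑ i, (P i * log (P i) - P i * log (Q i)) := by
    calc ∑ i, |√(P i) - √(Q i)| ^ 2
        ≤ ∑ i, (P i * log (P i) - P i * log (Q i) - P i + Q i) :=
          sum_le_sum fun i _ => (sq_abs _).trans_le (sq_sqrt_sub_sqrt_le (hP i) (hQ i))
      _ = ∑ i, (P i * log (P i) - P i * log (Q i)) := by
          rw [sum_add_distrib, sum_sub_distrib, hP1, hQ1]
          ring
  have hsum : ∑ i, (√(P i) + √(Q i)) ^ 2 ≤ 4 := by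
    calc ∑ i, (√(P i) + √(Q i)) ^ 2 ≤ ∑ i, 2 * (P i + Q i) :=
          sum_le_sum fun i _ => by nlinarith [sq_nonneg (√(P i) - √(Q i)), hP2 i, hQ2 i]
      _ = 4 := by
          rw [← mul_sum, sum_add_distrib, hP1, hQ1]
          norm_num
  calc (∑ i, |P i - Q i|) ^ 2
      = (∑ i, |√(P i) - √(Q i)| * (√(P i) + √(Q i))) ^ 2 := by simp only [habs]
    _ ≤ (∑ i, |√(P i) - √(Q i)| ^ 2) * ∑ i, (√(P i) + √(Q i)) ^ 2 :=
        sum_mul_sq_le_sq_mul_sq _ _ _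
    _ ≤ (∑ i, (P i * log (P i) - P i * log (Q i))) * 4 :=
        mul_le_mul hhell hsum (sum_nonneg fun i _ => sq_nonneg _)
          ((sum_nonneg fun i _ => sq_nonneg _).trans hhell)
    _ = 4 * ∑ i, (P i * log (P i) - P i * log (Q i)) := mul_comm _ _

section Law

variable {Ω α β γ : Type*} [Fintype Ω]

def law [DecidableEq α] (w : Ω → ℝ) (f : Ω → α) (a : α) : ℝ :=
  ∑ ω, if f ω = a then w ω else 0

lemma law_nonneg [DecidableEq α] {w : Ω → ℝ} (hw : ∀ ω, 0 ≤ w ω) (f : Ω → α) (a : α) :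
    0 ≤ law w f a :=
  sum_nonneg fun ω _ => by split_ifs <;> simp [hw ω]

lemma sum_law [Fintype α] [DecidableEq α] (w : Ω → ℝ) (f : Ω → α) :
    ∑ a, law w f a = ∑ ω, w ω := by
  simp only [law]
  rw [sum_comm]
  simp

lemma exists_eq_of_law_ne_zero [DecidableEq α] {w : Ω → ℝ} {f : Ω → α} {a : α}
    (h : law w f a ≠ 0) : ∃ ω, f ω = a := by
  by_contra! hne
  exact h (sum_eq_zero fun ω _ => if_neg (hne ω))

lemma law_comp [Fintype α] [DecidableEq α] [DecidableEq β] (w : Ω → ℝ) (f : Ω → α) (φ : α → β)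
    (b : β) : law w (fun ω => φ (f ω)) b = ∑ a with φ a = b, law w f a := by
  simp only [law, sum_filter]
  calc ∑ ω, (if φ (f ω) = b then w ω else 0)
      = ∑ ω, ∑ a, if f ω = a then (if φ a = b then w ω else 0) else 0 := by simp
    _ = ∑ a, if φ a = b then ∑ ω, (if f ω = a then w ω else 0) else 0 := by
      rw [sum_comm]
      refine sum_congr rfl fun a _ => ?_
      by_cases h : φ a = b <;> simp [h]

lemma sum_law_pair [Fintype β] [DecidableEq α] [DecidableEq β] (w : Ω → ℝ) (f : Ω → α)
    (g : Ω → β) (a : α) : ∑ b, law w (fun ω => (f ω, g ω)) (a, b) = law w f a := by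
  simp only [law]
  rw [sum_comm]
  refine sum_congr rfl fun ω _ => ?_
  by_cases h : f ω = a <;> simp [h]

lemma law_pair_le_law [DecidableEq α] [DecidableEq β] {w : Ω → ℝ} (hw : ∀ ω, 0 ≤ w ω)
    (f : Ω → α) (g : Ω → β) (a : α) (b : β) : law w (fun ω => (f ω, g ω)) (a, b) ≤ law w f a :=
  sum_le_sum fun ω _ => by by_cases h : f ω = a <;> by_cases h' : g ω = b <;> simp [h, h', hw ω]

lemma law_pair_comp_left [Fintype α] [Fintype β] [Fintype γ] [DecidableEq α] [DecidableEq β]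
    [DecidableEq γ] (w : Ω → ℝ) (f : Ω → α) (g : Ω → β) (φ : α → γ) (c : γ) (b : β) :
    law w (fun ω => (φ (f ω), g ω)) (c, b)
      = ∑ a with φ a = c, law w (fun ω => (f ω, g ω)) (a, b) := by
  refine (law_comp w (fun ω => (f ω, g ω)) (Prod.map φ id) (c, b)).trans ?_
  simp [sum_filter, Fintype.sum_prod_type, ite_and]

lemma law_pair_comp_right [Fintype α] [Fintype γ] [DecidableEq α] [DecidableEq β]
    [DecidableEq γ] (w : Ω → ℝ) (f : Ω → α) (g : Ω → γ) (ψ : γ → β) (a : α) (b : β) :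
    law w (fun ω => (f ω, ψ (g ω))) (a, b)
      = ∑ c with ψ c = b, law w (fun ω => (f ω, g ω)) (a, c) := by
  refine (law_comp w (fun ω => (f ω, g ω)) (Prod.map id ψ) (a, b)).trans ?_
  simp [sum_filter, Fintype.sum_prod_type, ite_and]

end Law

section Entropy

variable {Ω α β γ : Type*} [Fintype Ω] [Fintype α] [Fintype β] [DecidableEq α] [DecidableEq β]

noncomputable def entropy (w : Ω → ℝ) (f : Ω → α) : ℝ := ∑ a, negMulLog (law w f a)

lemma entropy_comp_equiv [Fintype γ] [DecidableEq γ] (w : Ω → ℝ) (f : Ω → α) (e : α ≃ γ) :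
    entropy w (fun ω => e (f ω)) = entropy w f := by
  have h : ∀ a, law w (fun ω => e (f ω)) (e a) = law w f a := fun a => by
    simp only [law, e.apply_eq_iff_eq]
  simp only [entropy, ← e.sum_comp, h]

lemma entropy_of_unique [Unique α] (w : Ω → ℝ) (f : Ω → α) :
    entropy w f = negMulLog (∑ ω, w ω) := by
  simp [entropy, law, Subsingleton.elim (f _) default]

/-- `∑ a, Pr[f = a] · cp(g | f = a)`; fibres of mass zero contribute `x / 0 = 0`. -/
noncomputable def condCollision (w : Ω → ℝ) (f : Ω → α) (g : Ω → β) : ℝ :=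
  ∑ a, ∑ b, law w (fun ω => (f ω, g ω)) (a, b) ^ 2 / law w f a

lemma condCollision_le {w : Ω → ℝ} (hw : ∀ ω, 0 ≤ w ω) {f : Ω → α} {g : Ω → β} {κ : ℝ}
    (hκ : ∀ a, law w f a ≠ 0 →
      (∑ b, law w (fun ω => (f ω, g ω)) (a, b) ^ 2) / law w f a ^ 2 ≤ κ) :
    condCollision w f g ≤ κ * ∑ ω, w ω := by
  rw [← sum_law w f, mul_sum]
  refine sum_le_sum fun a _ => ?_
  rw [← sum_div]
  rcases (law_nonneg hw f a).eq_or_lt with h | h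
  · simp [← h]
  · have := hκ a h.ne'
    rw [div_le_iff₀ (by positivity)] at this
    rw [div_le_iff₀ h]
    linarith

lemma condCollision_comp_le [Fintype γ] [DecidableEq γ] {w : Ω → ℝ} (hw : ∀ ω, 0 ≤ w ω)
    (f : Ω → α) (g : Ω → β) (φ : α → γ) :
    condCollision w (fun ω => φ (f ω)) g ≤ condCollision w f g := by
  simp only [condCollision, law_pair_comp_left, law_comp]
  calc ∑ c, ∑ b, (∑ a with φ a = c, law w (fun ω => (f ω, g ω)) (a, b)) ^ 2
          / ∑ a with φ a = c, law w f a
      ≤ ∑ c, ∑ b, ∑ a with φ a = c, law w (fun ω => (f ω, g ω)) (a, b) ^ 2 / law w f a :=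
        sum_le_sum fun c _ => sum_le_sum fun b _ =>
          sq_sum_div_le_sum_sq_div_of_nonneg _ (fun a _ => law_nonneg hw f a) fun a _ h =>
            le_antisymm (h ▸ law_pair_le_law hw f g a b) (law_nonneg hw _ _)
    _ = ∑ a, ∑ b, law w (fun ω => (f ω, g ω)) (a, b) ^ 2 / law w f a := by
      rw [sum_comm, sum_comm (γ := α)]
      exact sum_congr rfl fun b _ => sum_fiberwise _ φ _

lemma entropy_pair_ge {w : Ω → ℝ} (hw : ∀ ω, 0 ≤ w ω) (hw1 : ∑ ω, w ω = 1)
    (f : Ω → α) (g : Ω → β) :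
    entropy w f + log (Fintype.card β) + 1 - Fintype.card β * condCollision w f g
      ≤ entropy w (fun ω => (f ω, g ω)) := by
  have key := sum_le_sum fun a (_ : a ∈ univ) =>
    le_sum_negMulLog (fun b => law w (fun ω => (f ω, g ω)) (a, b)) fun b => law_nonneg hw _ _
  simp only [sum_law_pair] at key
  rw [show entropy w (fun ω => (f ω, g ω)) = _ from Fintype.sum_prod_type _]
  refine le_trans (le_of_eq ?_) key
  simp only [sum_add_distrib, sum_sub_distrib, ← sum_mul, ← mul_sum, sum_law, hw1, entropy,
    condCollision]
  ring

end Entropy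

section Hashing

lemma sum_sq_sum_fiber_eq {β γ : Type*} [Fintype β] [Fintype γ] [DecidableEq β] (φ : γ → β)
    (m : γ → ℝ) :
    ∑ b, (∑ c with φ c = b, m c) ^ 2 = ∑ c, ∑ c', if φ c = φ c' then m c * m c' else 0 := by
  simp only [sq, sum_filter, sum_mul_sum]
  rw [sum_comm]
  refine sum_congr rfl fun c _ => ?_
  rw [sum_comm]
  refine sum_congr rfl fun c' _ => ?_
  by_cases h : φ c = φ c' <;> simp [ite_mul, mul_ite, h, eq_comm]

variable {Hfam β γ : Type*} [Fintype Hfam] [Nonempty Hfam] [Fintype β] [Fintype γ]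
  [DecidableEq β] {hash : Hfam → γ → β}

lemma sum_sum_sq_sum_fiber_le_of_universal
    (huniv : ∀ c c' : γ, c ≠ c' →
      (∑ h, if hash h c = hash h c' then (1 : ℝ) else 0) / Fintype.card Hfam
        ≤ 1 / Fintype.card β)
    (m : γ → ℝ) (hm : ∀ c, 0 ≤ m c) :
    ∑ h, ∑ b, (∑ c with hash h c = b, m c) ^ 2
      ≤ Fintype.card Hfam * (∑ c, m c ^ 2 + (∑ c, m c) ^ 2 / Fintype.card β) := by
  classical
  have hH : (0 : ℝ) < Fintype.card Hfam := by exact_mod_cast Fintype.card_pos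
  have hcoll : ∀ c c', (∑ h, if hash h c = hash h c' then (1 : ℝ) else 0)
      ≤ Fintype.card Hfam * ((if c = c' then 1 else 0) + 1 / Fintype.card β) := by
    intro c c'
    by_cases hc : c = c'
    · subst hc
      simpa using le_mul_of_one_le_right hH.le (le_add_of_nonneg_right (by positivity))
    · simpa [hc, mul_comm, div_le_iff₀ hH] using huniv c c' hc
  calc ∑ h, ∑ b, (∑ c with hash h c = b, m c) ^ 2
      = ∑ c, ∑ c', (∑ h, if hash h c = hash h c' then (1 : ℝ) else 0) * (m c * m c') := by
        simp only [sum_sq_sum_fiber_eq, sum_mul, boole_mul]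
        rw [sum_comm]
        exact sum_congr rfl fun c _ => sum_comm
    _ ≤ ∑ c, ∑ c', Fintype.card Hfam * ((if c = c' then 1 else 0) + 1 / Fintype.card β)
          * (m c * m c') :=
        sum_le_sum fun c _ => sum_le_sum fun c' _ =>
          mul_le_mul_of_nonneg_right (hcoll c c') (mul_nonneg (hm c) (hm c'))
    _ = Fintype.card Hfam * ∑ c, m c ^ 2
          + Fintype.card Hfam / Fintype.card β * ∑ c, ∑ c', m c * m c' := by
        simp only [mul_add, add_mul, sum_add_distrib, mul_sum]
        congr 1
        · exact sum_congr rfl fun c _ => by simp [mul_ite, ite_mul, sq]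
        · exact sum_congr rfl fun c _ => sum_congr rfl fun c' _ => by ring
    _ = Fintype.card Hfam * (∑ c, m c ^ 2 + (∑ c, m c) ^ 2 / Fintype.card β) := by
        rw [sq (∑ c, m c), sum_mul_sum]
        ring

variable {Ω α : Type*} [Fintype Ω] [Fintype α] [DecidableEq α] [DecidableEq γ] {w : Ω → ℝ}

lemma sum_condCollision_hash_le (hw : ∀ ω, 0 ≤ w ω) (hw1 : ∑ ω, w ω = 1)
    (huniv : ∀ c c' : γ, c ≠ c' →
      (∑ h, if hash h c = hash h c' then (1 : ℝ) else 0) / Fintype.card Hfam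
        ≤ 1 / Fintype.card β)
    (f : Ω → α) (g : Ω → γ) :
    ∑ h, condCollision w f (fun ω => hash h (g ω))
      ≤ Fintype.card Hfam * (condCollision w f g + 1 / Fintype.card β) := by
  simp only [condCollision, law_pair_comp_right]
  rw [sum_comm]
  calc ∑ a, ∑ h, ∑ b, (∑ c with hash h c = b, law w (fun ω => (f ω, g ω)) (a, c)) ^ 2
          / law w f a
      = ∑ a, (∑ h, ∑ b, (∑ c with hash h c = b, law w (fun ω => (f ω, g ω)) (a, c)) ^ 2)
          / law w f a := by
        simp only [sum_div]
    _ ≤ ∑ a, Fintype.card Hfam * (∑ c, law w (fun ω => (f ω, g ω)) (a, c) ^ 2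
          + law w f a ^ 2 / Fintype.card β) / law w f a := by
        refine sum_le_sum fun a _ => div_le_div_of_nonneg_right ?_ (law_nonneg hw f a)
        simpa only [sum_law_pair] using sum_sum_sq_sum_fiber_le_of_universal huniv _
          fun c => law_nonneg hw (fun ω => (f ω, g ω)) (a, c)
    _ = Fintype.card Hfam * (∑ a, ∑ c, law w (fun ω => (f ω, g ω)) (a, c) ^ 2 / law w f a
          + ∑ a, law w f a / Fintype.card β) := by
        rw [mul_add, mul_sum, mul_sum, ← sum_add_distrib]
        refine sum_congr rfl fun a _ => ?_
        rw [← sum_div]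
        rcases eq_or_ne (law w f a) 0 with h | h
        · simp [h]
        · field_simp
    _ = Fintype.card Hfam * (∑ a, ∑ c, law w (fun ω => (f ω, g ω)) (a, c) ^ 2 / law w f a
          + 1 / Fintype.card β) := by
        rw [← sum_div, sum_law, hw1]

end Hashing

section BlockSource

variable {Hfam β γ : Type*} {T : ℕ}

lemma take_eq_take_iff {i : ℕ} (hi : i ≤ T) {x y : Fin T → γ} :
    Fin.take i hi y = Fin.take i hi x ↔ ∀ j : Fin T, j < i → y j = x j :=
  ⟨fun h j hj => congrFun h ⟨j, hj⟩, fun h => funext fun j => h _ j.isLt⟩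

variable [Fintype β] [DecidableEq β] [Fintype γ]

lemma entropy_hash_take_succ (p : (Fin T → γ) → ℝ) (hash : Hfam → γ → β) (h : Hfam) (i : ℕ)
    (hi : i < T) :
    entropy p (fun x => hash h ∘ Fin.take (i + 1) hi x)
      = entropy p (fun x => (hash h ∘ Fin.take i hi.le x, hash h (x ⟨i, hi⟩))) := by
  rw [← entropy_comp_equiv p _ ((Equiv.prodComm _ _).trans (Fin.snocEquiv fun _ => β))]
  congr 1
  funext x
  exact Fin.take_succ_eq_snoc i hi (hash h ∘ x)

variable [DecidableEq γ]

lemma law_take (p : (Fin T → γ) → ℝ) (i : Fin T) (x : Fin T → γ) :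
    law p (Fin.take i i.isLt.le) (Fin.take i i.isLt.le x)
      = ∑ y, if ∀ j, j < i → y j = x j then p y else 0 :=
  sum_congr rfl fun _ _ => if_congr (take_eq_take_iff _) rfl rfl

lemma law_take_pair (p : (Fin T → γ) → ℝ) (i : Fin T) (x : Fin T → γ) (v : γ) :
    law p (fun y => (Fin.take i i.isLt.le y, y i)) (Fin.take i i.isLt.le x, v)
      = ∑ y, if (∀ j, j < i → y j = x j) ∧ y i = v then p y else 0 :=
  sum_congr rfl fun _ _ => if_congr (Prod.mk.injEq .. ▸ and_congr (take_eq_take_iff _) Iff.rfl)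
    rfl rfl

variable [Fintype Hfam] [Nonempty Hfam] {hash : Hfam → γ → β} {p : (Fin T → γ) → ℝ}

lemma sum_entropy_hash_take_succ_ge (hp0 : ∀ x, 0 ≤ p x) (hp1 : ∑ x, p x = 1)
    (huniv : ∀ c c' : γ, c ≠ c' →
      (∑ h, if hash h c = hash h c' then (1 : ℝ) else 0) / Fintype.card Hfam
        ≤ 1 / Fintype.card β)
    {κ : ℝ} (i : ℕ) (hi : i < T)
    (hblock : condCollision p (Fin.take i hi.le) (fun x => x ⟨i, hi⟩) ≤ κ) :
    ∑ h, entropy p (fun x => hash h ∘ Fin.take i hi.le x)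
        + Fintype.card Hfam * (log (Fintype.card β) - Fintype.card β * κ)
      ≤ ∑ h, entropy p (fun x => hash h ∘ Fin.take (i + 1) hi x) := by
  obtain ⟨x, -, -⟩ := exists_ne_zero_of_sum_ne_zero (hp1 ▸ one_ne_zero : ∑ x, p x ≠ 0)
  have : Nonempty β := ⟨hash (Classical.arbitrary Hfam) (x ⟨i, hi⟩)⟩
  have hM : (0 : ℝ) < Fintype.card β := by exact_mod_cast Fintype.card_pos
  have hcoll : ∑ h, condCollision p (Fin.take i hi.le) (fun x => hash h (x ⟨i, hi⟩))
      ≤ Fintype.card Hfam * (κ + 1 / Fintype.card β) :=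
    (sum_condCollision_hash_le hp0 hp1 huniv _ _).trans (by gcongr)
  set M : ℝ := (Fintype.card β : ℝ)
  have step h : entropy p (fun x => hash h ∘ Fin.take i hi.le x) + log M + 1
      - M * condCollision p (Fin.take i hi.le) (fun x => hash h (x ⟨i, hi⟩))
      ≤ entropy p (fun x => hash h ∘ Fin.take (i + 1) hi x) := by
    rw [entropy_hash_take_succ]
    refine le_trans ?_ (entropy_pair_ge hp0 hp1 _ _)
    gcongr
    exact condCollision_comp_le hp0 _ _ _
  calc ∑ h, entropy p (fun x => hash h ∘ Fin.take i hi.le x)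
        + Fintype.card Hfam * (log M - M * κ)
      = ∑ h, entropy p (fun x => hash h ∘ Fin.take i hi.le x) + Fintype.card Hfam * (log M + 1)
        - M * (Fintype.card Hfam * (κ + 1 / M)) := by
        field_simp
        ring
    _ ≤ ∑ h, entropy p (fun x => hash h ∘ Fin.take i hi.le x) + Fintype.card Hfam * (log M + 1)
        - M * ∑ h, condCollision p (Fin.take i hi.le) (fun x => hash h (x ⟨i, hi⟩)) := by
        gcongr
    _ = ∑ h, (entropy p (fun x => hash h ∘ Fin.take i hi.le x) + log M + 1
        - M * condCollision p (Fin.take i hi.le) (fun x => hash h (x ⟨i, hi⟩))) := by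
        simp only [sum_sub_distrib, sum_add_distrib, ← mul_sum, sum_const, card_univ,
          nsmul_eq_mul]
        ring
    _ ≤ _ := sum_le_sum fun h _ => step h

lemma le_sum_entropy_hash_take (hp0 : ∀ x, 0 ≤ p x) (hp1 : ∑ x, p x = 1)
    (huniv : ∀ c c' : γ, c ≠ c' →
      (∑ h, if hash h c = hash h c' then (1 : ℝ) else 0) / Fintype.card Hfam
        ≤ 1 / Fintype.card β)
    {κ : ℝ} (hblock : ∀ i : Fin T, condCollision p (Fin.take i i.isLt.le) (fun x => x i) ≤ κ) :
    ∀ i (hi : i ≤ T), Fintype.card Hfam * (i * (log (Fintype.card β) - Fintype.card β * κ))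
      ≤ ∑ h, entropy p (fun x => hash h ∘ Fin.take i hi x) := by
  intro i
  induction i with
  | zero => simp [entropy_of_unique, hp1]
  | succ i ih =>
    intro hi
    have hi' : i < T := hi
    calc (Fintype.card Hfam : ℝ) * ((i + 1 : ℕ) * (log (Fintype.card β) - Fintype.card β * κ))
        = Fintype.card Hfam * (i * (log (Fintype.card β) - Fintype.card β * κ))
          + Fintype.card Hfam * (log (Fintype.card β) - Fintype.card β * κ) := by
          push_cast
          ring
      _ ≤ ∑ h, entropy p (fun x => hash h ∘ Fin.take i hi'.le x)
          + Fintype.card Hfam * (log (Fintype.card β) - Fintype.card β * κ) := by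
          gcongr
          exact ih hi'.le
      _ ≤ _ := sum_entropy_hash_take_succ_ge hp0 hp1 huniv i hi' (hblock ⟨i, hi'⟩)

end BlockSource

lemma sum_negMulLog_one_div_card_mul {Hfam Y : Type*} [Fintype Hfam] [Nonempty Hfam]
    [Fintype Y] (L : Hfam → Y → ℝ) (hL : ∀ h, ∑ y, L h y = 1) :
    ∑ z : Hfam × Y, negMulLog ((1 / Fintype.card Hfam : ℝ) * L z.1 z.2)
      = log (Fintype.card Hfam) + (1 / Fintype.card Hfam) * ∑ h, ∑ y, negMulLog (L h y) := by
  have hH : (Fintype.card Hfam : ℝ) ≠ 0 := by exact_mod_cast Fintype.card_ne_zero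
  simp only [negMulLog_mul, Fintype.sum_prod_type, sum_add_distrib, ← sum_mul, ← mul_sum, hL]
  simp [negMulLog, hH]

lemma sq_sum_sum_abs_sub_uniform_le {Hfam Ω Y : Type*} [Fintype Hfam] [Nonempty Hfam]
    [Fintype Ω] [Fintype Y] [DecidableEq Y] (F : Hfam → Ω → Y) {p : Ω → ℝ}
    (hp0 : ∀ x, 0 ≤ p x) (hp1 : ∑ x, p x = 1) {D : ℝ}
    (hD : Fintype.card Hfam * (log (Fintype.card Y) - D) ≤ ∑ h, entropy p (F h)) :
    (∑ h, ∑ y, |(1 / Fintype.card Hfam : ℝ) * law p (F h) y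
        - 1 / (Fintype.card Hfam * Fintype.card Y)|) ^ 2 ≤ 4 * D := by
  obtain ⟨x, -, -⟩ := exists_ne_zero_of_sum_ne_zero (hp1 ▸ one_ne_zero : ∑ x, p x ≠ 0)
  have : Nonempty Y := ⟨F (Classical.arbitrary Hfam) x⟩
  have hH : (0 : ℝ) < Fintype.card Hfam := by exact_mod_cast Fintype.card_pos
  have hY : (0 : ℝ) < Fintype.card Y := by exact_mod_cast Fintype.card_pos
  have hL h : ∑ y, law p (F h) y = 1 := (sum_law p (F h)).trans hp1
  set P : Hfam × Y → ℝ := fun z => (1 / Fintype.card Hfam : ℝ) * law p (F z.1) z.2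
  set q : ℝ := 1 / (Fintype.card Hfam * Fintype.card Y)
  have hP1 : ∑ z, P z = 1 := by
    simp [P, Fintype.sum_prod_type, ← mul_sum, hL, hH.ne']
  have hQ1 : ∑ _z : Hfam × Y, q = 1 := by
    rw [sum_const, card_univ, Fintype.card_prod, nsmul_eq_mul]
    push_cast
    exact mul_one_div_cancel (by positivity)
  have hent : ∑ z, negMulLog (P z) = log (Fintype.card Hfam)
      + (1 / Fintype.card Hfam) * ∑ h, entropy p (F h) :=
    sum_negMulLog_one_div_card_mul (fun h y => law p (F h) y) hL
  have hKL : ∑ z, (P z * log (P z) - P z * log q)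
      = log (Fintype.card Y) - (1 / Fintype.card Hfam) * ∑ h, entropy p (F h) := by
    have hmul z : P z * log (P z) = -negMulLog (P z) := by simp [negMulLog]
    rw [sum_sub_distrib, ← sum_mul, hP1, sum_congr rfl fun z _ => hmul z, sum_neg_distrib, hent]
    simp only [q, one_div, log_inv, log_mul hH.ne' hY.ne']
    ring
  have hD' : log (Fintype.card Y) - D ≤ (1 / Fintype.card Hfam) * ∑ h, entropy p (F h) := by
    rw [one_div, ← div_eq_inv_mul, le_div_iff₀ hH, mul_comm]
    exact hD
  rw [← Fintype.sum_prod_type' (fun h y => |P (h, y) - q|)]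
  refine (sq_sum_abs_sub_le (fun z => mul_nonneg (by positivity) (law_nonneg hp0 _ _))
    (fun _ => by positivity) hP1 hQ1).trans ?_
  rw [hKL]
  linarith

/-- Theorem 3: hashing a block `K`-source with a random
2-universal hash function yields a joint distribution `(H, H(X_1),...,H(X_T))`
that is `ε`-close to `(H, U_{[M]^T})`, provided `K > MT/ε²`. -/
theorem stmt8 {N M T : ℕ} {Hfam : Type} [Fintype Hfam] [Nonempty Hfam]
    (hash : Hfam → Fin N → Fin M)
    (huniv : ∀ x x' : Fin N, x ≠ x' →
      (∑ hh : Hfam, if hash hh x = hash hh x' then (1 : ℝ) else 0)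
        / Fintype.card Hfam ≤ 1 / M)
    (p : (Fin T → Fin N) → ℝ) (hp0 : ∀ x, 0 ≤ p x) (hp1 : ∑ x, p x = 1)
    (K ε : ℝ) (hε : 0 < ε)
    -- `margLt i x` = Pr[X_{<i} = x_{<i}]
    (margLt : Fin T → (Fin T → Fin N) → ℝ)
    (hmargLt : ∀ i x, margLt i x =
      ∑ y, if (∀ j, j < i → y j = x j) then p y else 0)
    -- `margLeVal i x v` = Pr[X_{<i} = x_{<i} ∧ X_i = v]
    (margLeVal : Fin T → (Fin T → Fin N) → Fin N → ℝ)
    (hmargLeVal : ∀ i x v, margLeVal i x v =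
      ∑ y, if (∀ j, j < i → y j = x j) ∧ y i = v then p y else 0)
    -- block `K`-source: conditional collision probability at most `1/K`
    (hblock : ∀ i x, margLt i x ≠ 0 →
      (∑ v, (margLeVal i x v) ^ 2) / (margLt i x) ^ 2 ≤ 1 / K)
    (hK : M * T / ε ^ 2 < K) :
    (1 / 2 : ℝ) * ∑ hh : Hfam, ∑ y : Fin T → Fin M,
      |(1 / Fintype.card Hfam : ℝ) *
          (∑ x, if (∀ i, hash hh (x i) = y i) then p x else 0)
        - 1 / (Fintype.card Hfam * M ^ T)| ≤ ε := by
  have hK0 : 0 < K := lt_of_le_of_lt (by positivity) hK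
  have hblock' (i : Fin T) : condCollision p (Fin.take i i.isLt.le) (fun x => x i) ≤ 1 / K := by
    refine (condCollision_le hp0 fun a ha => ?_).trans_eq (by rw [hp1, mul_one])
    obtain ⟨x, rfl⟩ := exists_eq_of_law_ne_zero ha
    simp only [law_take, law_take_pair, ← hmargLt, ← hmargLeVal] at ha ⊢
    exact hblock i x ha
  have hent := le_sum_entropy_hash_take (hash := hash) hp0 hp1 (by simpa using huniv)
    hblock' T le_rfl
  simp only [Fin.take_eq_self, Fintype.card_fin] at hent
  have hsq := sq_sum_sum_abs_sub_uniform_le (fun h x => hash h ∘ x) hp0 hp1 (D := M * T / K)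
    (by convert hent using 2; simp [log_pow]; ring)
  simp only [Fintype.card_fun, Fintype.card_fin, Nat.cast_pow] at hsq
  have hMTK : M * T / K < ε ^ 2 := by
    rw [div_lt_iff₀ (by positivity)] at hK
    rw [div_lt_iff₀ hK0]
    linarith
  have hlaw hh y : (∑ x, if (∀ i, hash hh (x i) = y i) then p x else 0)
      = law p (fun x => hash hh ∘ x) y :=
    sum_congr rfl fun x _ => if_congr funext_iff.symm rfl rfl
  simp only [hlaw]
  have hsum := (sq_le_sq₀ (by positivity) (by positivity)).1
    (hsq.trans (by linarith : 4 * (M * T / K) ≤ (2 * ε) ^ 2))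
  linarith
end

section
/- Let X and Y be random variables over [M] with statistical distance Δ(X,Y) = ε. Then there exists a randomized function f:[M]→{0,1} such that f(Y) is uniform on {0,1} and Δ(f(X), f(Y)) ≥ ε/2. -/
/-!
Here `p`, `q` are the distributions of `X`, `Y` and `f x` is the probability that `f` outputs `1`
on input `x`. Let `A` be the set where `p > q` and `s = q(A)`; then `p(A) - q(A) = ε`. A function
equal to `a` on `A` and to `b` off `A` has `E f(Y) = b + (a - b) s` and
`E f(X) - E f(Y) = (a - b) ε`, and for every `s ∈ [0, 1]` there are `0 ≤ b ≤ a ≤ 1` with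
`b + (a - b) s = 1/2` and `a - b ≥ 1/2`.
-/

open Finset

theorem sum_filter_pos_eq_sum_max_zero {ι G : Type*} [Fintype ι] [AddCommGroup G]
    [LinearOrder G] [IsOrderedAddMonoid G] (d : ι → G) :
    ∑ x with 0 < d x, d x = ∑ x, max (d x) 0 := by
  rw [sum_filter]
  refine sum_congr rfl fun x _ => ?_
  split_ifs with h
  · exact (max_eq_left h.le).symm
  · exact (max_eq_right (not_lt.mp h)).symm

theorem two_nsmul_sum_filter_pos_eq_sum_abs {ι G : Type*} [Fintype ι] [AddCommGroup G]
    [LinearOrder G] [IsOrderedAddMonoid G] (d : ι → G) (hd : ∑ x, d x = 0) :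
    2 • ∑ x with 0 < d x, d x = ∑ x, |d x| := by
  have hneg : ∑ x, max (-d x) 0 = ∑ x, max (d x) 0 := by
    have := sum_sub_distrib (s := univ) (fun x => max (d x) 0) (fun x => max (-d x) 0)
    simp only [max_zero_sub_max_neg_zero_eq_self, hd] at this
    exact (sub_eq_zero.mp this.symm).symm
  simp only [← max_zero_add_max_neg_zero_eq_abs_self, sum_add_distrib, hneg,
    sum_filter_pos_eq_sum_max_zero, two_nsmul]

theorem sum_mul_ite_mem {ι R : Type*} [Fintype ι] [DecidableEq ι] [CommRing R] (g : ι → R)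
    (A : Finset ι) (a b : R) :
    ∑ x, g x * (if x ∈ A then a else b) = b * ∑ x, g x + (a - b) * ∑ x ∈ A, g x := by
  have hite : ∀ x,
      g x * (if x ∈ A then a else b) = b * g x + if x ∈ A then (a - b) * g x else 0 := by
    intro x; split_ifs <;> ring
  simp only [hite, sum_add_distrib, ← mul_sum, sum_ite_mem, univ_inter]

theorem exists_two_level_of_mem_Icc {s : ℝ} (hs0 : 0 ≤ s) (hs1 : s ≤ 1) :
    ∃ a b : ℝ, 0 ≤ b ∧ a ≤ 1 ∧ b + (a - b) * s = 1 / 2 ∧ 1 / 2 ≤ a - b := by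
  rcases le_or_gt s (1 / 2) with hs | hs
  · have h1s : 0 < 1 - s := by linarith
    refine ⟨1, (1 / 2 - s) / (1 - s), div_nonneg (by linarith) h1s.le, le_rfl, ?_, ?_⟩
    · field_simp; ring
    · rw [le_sub_iff_add_le, ← le_sub_iff_add_le', div_le_iff₀ h1s]; linarith
  · refine ⟨1 / (2 * s), 0, le_rfl, ?_, ?_, ?_⟩
    · rw [div_le_one (by linarith)]; linarith
    · field_simp; ring
    · rw [sub_zero, div_le_div_iff₀ two_pos (by linarith)]; linarith

theorem stmt10_general {M : ℕ} (ε : ℝ)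
    (p q : Fin M → ℝ)
    (hp1 : ∑ x, p x = 1)
    (hq0 : ∀ x, 0 ≤ q x) (hq1 : ∑ x, q x = 1)
    (hsd : (1 / 2 : ℝ) * ∑ x, |p x - q x| = ε) :
    ∃ f : Fin M → ℝ, (∀ x, 0 ≤ f x ∧ f x ≤ 1) ∧
      (∑ x, q x * f x = 1 / 2) ∧
      |(∑ x, p x * f x) - (∑ x, q x * f x)| ≥ ε / 2 := by
  set A : Finset (Fin M) := {x | 0 < p x - q x}
  have hsum_diff : ∑ x, (p x - q x) = 0 := by rw [sum_sub_distrib, hp1, hq1, sub_self]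
  have hεA : ∑ x ∈ A, (p x - q x) = ε := by
    rw [← hsd, ← two_nsmul_sum_filter_pos_eq_sum_abs _ hsum_diff, two_nsmul]; ring
  have hε0 : 0 ≤ ε := hεA ▸ sum_nonneg fun x hx => (mem_filter.mp hx).2.le
  obtain ⟨a, b, hb0, ha1, hhalf, hgap⟩ := exists_two_level_of_mem_Icc
    (sum_nonneg fun x _ => hq0 x : 0 ≤ ∑ x ∈ A, q x)
    (hq1 ▸ sum_le_univ_sum_of_nonneg hq0)
  have hqf : ∑ x, q x * (if x ∈ A then a else b) = 1 / 2 := by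
    rw [sum_mul_ite_mem, hq1, mul_one, hhalf]
  refine ⟨fun x => if x ∈ A then a else b, fun x => ?_, hqf, ?_⟩
  · dsimp only
    split_ifs <;> constructor <;> linarith
  · have hpf : ∑ x, p x * (if x ∈ A then a else b) - ∑ x, q x * (if x ∈ A then a else b)
        = (a - b) * ε := by
      rw [← sum_sub_distrib]
      simp only [← sub_mul]
      rw [sum_mul_ite_mem, hsum_diff, hεA, mul_zero, zero_add]
    rw [hpf, ge_iff_le]
    calc ε / 2 ≤ (a - b) * ε := by nlinarith
      _ ≤ |(a - b) * ε| := le_abs_self _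

/-- if `Δ(X,Y) = ε`, there is a randomized boolean function `f`
(given by the probability `f x` of outputting 1 on input `x`) such that
`f(Y)` is a uniform coin and `Δ(f(X), f(Y)) ≥ ε/2`. -/
theorem stmt10 {M : ℕ} (ε : ℝ)
    (p q : Fin M → ℝ)
    (hp0 : ∀ x, 0 ≤ p x) (hp1 : ∑ x, p x = 1)
    (hq0 : ∀ x, 0 ≤ q x) (hq1 : ∑ x, q x = 1)
    (hsd : (1 / 2 : ℝ) * ∑ x, |p x - q x| = ε) :
    ∃ f : Fin M → ℝ, (∀ x, 0 ≤ f x ∧ f x ≤ 1) ∧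
      (∑ x, q x * f x = 1 / 2) ∧
      |(∑ x, p x * f x) - (∑ x, q x * f x)| ≥ ε / 2 :=
  stmt10_general ε p q hp1 hq0 hq1 hsd
end

section
/- Let X be a Bernoulli random variable with Pr[X=0] = 1/2 − ε, and let X⃗ = (X_1,...,X_T) be T independent copies of X. Then there exist absolute constants ε₀ > 0 and c > 0 (independent of ε and T) such that the statistical distance from X⃗ to the uniform distribution on {0,1}^T is at least min{ε₀, c·√T·ε}. -/
/-!
Test the two product distributions against `f(y) = sin (x · S(y))`, where `S(y)` is the number
of `true` coordinates minus the number of `false` ones. Since `f` is the imaginary part of a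
product of unit complex numbers `e^{± i x}`, it is bounded by `1` and both expectations factor
over the coordinates: under the uniform distribution the mean is `Im (cos x)^T = 0`, under the
biased coin it is `Im (cos x + 2 i ε sin x)^T ≈ 2 ε T x · cos^{T-1} x`. With
`x = min (√T ε, 1/8) / (ε T)` this is of order `min (√T ε, 1/8)`, and it bounds the `ℓ¹`
distance from below.
-/

open Finset

theorem norm_add_pow_sub_le {R : Type*} [NormedCommRing R] [NormOneClass R] {a : R}
    (ha : ‖a‖ ≤ 1) (b : R) (n : ℕ) :
    ‖(a + b) ^ n - a ^ n - n * a ^ (n - 1) * b‖ ≤ (1 + ‖b‖) ^ n - 1 - n * ‖b‖ := by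
  rcases n with _ | n
  · simp
  induction n with
  | zero => simp
  | succ n ih =>
    -- `E n := (a + b) ^ n - a ^ n - n a ^ (n - 1) b` and the right side `R n` satisfy
    -- `E (n + 1) = (a + b) E n + n a ^ (n - 1) b ^ 2`
    -- and `R (n + 1) = (1 + ‖b‖) R n + n ‖b‖ ^ 2`.
    have hrec : (a + b) ^ (n + 2) - a ^ (n + 2) - ↑(n + 2) * a ^ (n + 1) * b
        = (a + b) * ((a + b) ^ (n + 1) - a ^ (n + 1) - ↑(n + 1) * a ^ n * b)
          + (n + 1) • (a ^ n * b ^ 2) := by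
      rw [nsmul_eq_mul]; push_cast; ring
    have han : ‖a ^ n‖ ≤ 1 := (norm_pow_le a n).trans (pow_le_one₀ (norm_nonneg a) ha)
    have hab : ‖a ^ n * b ^ 2‖ ≤ ‖b‖ ^ 2 :=
      calc ‖a ^ n * b ^ 2‖ ≤ ‖a ^ n‖ * ‖b‖ ^ 2 :=
            (norm_mul_le _ _).trans (by gcongr; exact norm_pow_le b 2)
        _ ≤ ‖b‖ ^ 2 := mul_le_of_le_one_left (by positivity) han
    simp only [Nat.add_sub_cancel] at ih ⊢
    rw [hrec]
    calc _ ≤ ‖a + b‖ * ‖(a + b) ^ (n + 1) - a ^ (n + 1) - ↑(n + 1) * a ^ n * b‖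
          + (n + 1) * ‖b‖ ^ 2 := by
          refine (norm_add_le _ _).trans (add_le_add (norm_mul_le _ _) (norm_nsmul_le.trans ?_))
          push_cast
          gcongr
      _ ≤ (1 + ‖b‖) * ((1 + ‖b‖) ^ (n + 1) - 1 - ↑(n + 1) * ‖b‖)
          + (n + 1) * ‖b‖ ^ 2 := by
          gcongr
          exact (norm_add_le _ _).trans (by linarith)
      _ = _ := by push_cast; ring

theorem one_add_pow_sub_le_sq {β : ℝ} (hβ : 0 ≤ β) {n : ℕ} (h : n * β ≤ 1) :
    (1 + β) ^ n - 1 - n * β ≤ (n * β) ^ 2 := by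
  have hexp : (1 + β) ^ n ≤ Real.exp (n * β) := by
    rw [Real.exp_nat_mul]
    exact pow_le_pow_left₀ (by linarith) (by linarith [Real.add_one_le_exp β]) n
  have := (abs_le.1 (Real.abs_exp_sub_one_sub_id_le (x := n * β)
    (by rw [abs_of_nonneg (by positivity)]; exact h))).2
  linarith

theorem le_im_add_mul_I_pow {c d : ℝ} (hc : |c| ≤ 1) (hd : 0 ≤ d) {n : ℕ} (h : n * d ≤ 1) :
    n * d * (c ^ (n - 1) - n * d) ≤ (((c : ℂ) + d * Complex.I) ^ n).im := by
  have hnorm := norm_add_pow_sub_le (a := (c : ℂ)) (by simpa using hc) (d * Complex.I) n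
  have hdI : ‖(d : ℂ) * Complex.I‖ = d := by simp [abs_of_nonneg hd]
  rw [hdI] at hnorm
  have him : (((c : ℂ) + d * Complex.I) ^ n - c ^ n - n * c ^ (n - 1) * (d * Complex.I)).im
      = (((c : ℂ) + d * Complex.I) ^ n).im - n * d * c ^ (n - 1) := by
    simp [← Complex.ofReal_pow, Complex.mul_im]; ring
  have hle := (abs_le.1 ((Complex.abs_im_le_norm _).trans
    (hnorm.trans (one_add_pow_sub_le_sq hd h)))).1
  rw [him] at hle
  linarith

theorem half_le_cos_pow_pred {x : ℝ} {n : ℕ} (h : n * x ^ 2 ≤ 1) :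
    1 / 2 ≤ Real.cos x ^ (n - 1) := by
  have hbern := one_add_mul_le_pow (a := Real.cos x - 1)
    (by linarith [Real.neg_one_le_cos x]) (n - 1)
  have hcos := Real.one_sub_sq_div_two_le_cos (x := x)
  have hn : ((n - 1 : ℕ) : ℝ) ≤ n := Nat.cast_le.2 (Nat.sub_le n 1)
  have : (n : ℝ) * (Real.cos x - 1) ≤ ((n - 1 : ℕ) : ℝ) * (Real.cos x - 1) :=
    mul_le_mul_of_nonpos_right hn (by linarith [Real.cos_le_one x])
  simp only [add_sub_cancel] at hbern
  nlinarith

theorem sum_mul_le_sum_abs {α : Type*} [Fintype α] (P f : α → ℝ) (hf : ∀ y, |f y| ≤ 1) :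
    ∑ y, P y * f y ≤ ∑ y, |P y| := by
  refine sum_le_sum fun y _ => ?_
  calc P y * f y ≤ |P y * f y| := le_abs_self _
    _ = |P y| * |f y| := abs_mul _ _
    _ ≤ |P y| := mul_le_of_le_one_right (abs_nonneg _) (hf y)

theorem sum_prod_mul_im_prod (T : ℕ) (g : Bool → ℝ) (w : Bool → ℂ) :
    ∑ y : Fin T → Bool, (∏ i, g (y i)) * (∏ i, w (y i)).im
      = ((∑ b, g b * w b) ^ T).im := by
  simp_rw [← Complex.im_ofReal_mul, Complex.ofReal_prod, ← prod_mul_distrib, ← Complex.im_sum,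
    Fintype.sum_pow]

noncomputable def phase (x : ℝ) (b : Bool) : ℂ :=
  Complex.exp ((bif b then x else -x : ℝ) * Complex.I)

theorem norm_phase (x : ℝ) (b : Bool) : ‖phase x b‖ = 1 := Complex.norm_exp_ofReal_mul_I _

theorem sum_mul_phase (g : Bool → ℝ) (x : ℝ) :
    ∑ b, (g b : ℂ) * phase x b
      = ((g true + g false) * Real.cos x : ℝ)
        + ((g true - g false) * Real.sin x : ℝ) * Complex.I := by
  simp only [Fintype.sum_bool, phase, cond_true, cond_false, Complex.exp_mul_I,
    ← Complex.ofReal_cos, ← Complex.ofReal_sin, Real.cos_neg, Real.sin_neg]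
  push_cast; ring

noncomputable def coinWeight (ε : ℝ) (b : Bool) : ℝ := if b then 1 / 2 + ε else 1 / 2 - ε

noncomputable def coinL1Dist (T : ℕ) (ε : ℝ) : ℝ :=
  ∑ y : Fin T → Bool, |∏ i, coinWeight ε (y i) - (1 / 2 : ℝ) ^ T|

theorem sum_coin_sub_uniform_mul_im_phase (T : ℕ) (ε x : ℝ) :
    ∑ y : Fin T → Bool,
        (∏ i, coinWeight ε (y i) - (1 / 2 : ℝ) ^ T) * (∏ i, phase x (y i)).im
      = (((Real.cos x : ℂ) + (2 * ε * Real.sin x : ℝ) * Complex.I) ^ T).im := by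
  have hcoin := sum_prod_mul_im_prod T (coinWeight ε) (phase x)
  have huniform := sum_prod_mul_im_prod T (fun _ => 1 / 2) (phase x)
  simp only [prod_const, card_univ, Fintype.card_fin] at huniform
  simp only [sub_mul, sum_sub_distrib]
  rw [hcoin, huniform, sum_mul_phase, sum_mul_phase]
  simp only [coinWeight, if_true, Bool.false_eq_true, if_false]
  have hcos : (1 / 2 + ε + (1 / 2 - ε)) * Real.cos x = Real.cos x := by ring
  have hsin : (1 / 2 + ε - (1 / 2 - ε)) * Real.sin x = 2 * ε * Real.sin x := by ring
  have hzero : (1 / 2 - 1 / 2) * Real.sin x = 0 := by ring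
  rw [hcos, hsin, add_halves, one_mul, hzero, Complex.ofReal_zero, zero_mul, add_zero,
    ← Complex.ofReal_pow, Complex.ofReal_im, sub_zero]

theorem le_coinL1Dist (T : ℕ) {ε x : ℝ} (hε : 0 ≤ ε) (hx0 : 0 < x) (hx1 : x ≤ 1)
    (hTx : T * x ^ 2 ≤ 1) (hεTx : 2 * ε * T * x ≤ 1 / 4) :
    ε * T * x / 4 ≤ coinL1Dist T ε := by
  set d := 2 * ε * Real.sin x
  have hd : 0 ≤ d := mul_nonneg (by positivity) (Real.sin_nonneg_of_nonneg_of_le_pi hx0.le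
    (by linarith [Real.pi_gt_three]))
  have hTd : ε * T * x ≤ T * d ∧ T * d ≤ 1 / 4 := by
    have hsin := Real.sin_gt_sub_cube hx0
    have hsin' := Real.sin_le hx0.le
    have hx3 : x ^ 3 ≤ x := by nlinarith
    have hεT : 0 ≤ ε * T := by positivity
    constructor <;> nlinarith
  calc ε * T * x / 4 ≤ T * d * (1 / 2 - T * d) := by
        nlinarith [mul_nonneg (hTd.1.trans' (by positivity)) (sub_nonneg.2 hTd.2)]
    _ ≤ T * d * (Real.cos x ^ (T - 1) - T * d) := by
        gcongr; exact half_le_cos_pow_pred hTx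
    _ ≤ (((Real.cos x : ℂ) + d * Complex.I) ^ T).im :=
        le_im_add_mul_I_pow (Real.abs_cos_le_one x) hd (by linarith)
    _ = _ := (sum_coin_sub_uniform_mul_im_phase T ε x).symm
    _ ≤ _ := sum_mul_le_sum_abs _ _ fun y =>
        (Complex.abs_im_le_norm _).trans (by simp [norm_phase])

theorem min_sqrt_mul_div_four_le_coinL1Dist (T : ℕ) {ε : ℝ} (hε : 0 ≤ ε) :
    min (Real.sqrt T * ε) (1 / 8) / 4 ≤ coinL1Dist T ε := by
  set r := Real.sqrt T
  rcases (mul_nonneg (Real.sqrt_nonneg T) hε).eq_or_lt with hs | hs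
  · rw [← hs, min_eq_left (by norm_num), zero_div]
    exact sum_nonneg fun _ _ => abs_nonneg _
  have hr : 0 < r := pos_of_mul_pos_left hs hε
  have hε : 0 < ε := pos_of_mul_pos_right hs hr.le
  have hr1 : 1 ≤ r :=
    Real.one_le_sqrt.2 (by exact_mod_cast Nat.pos_of_ne_zero (by simpa [r] using hr.ne'))
  have hrT : r ^ 2 = T := Real.sq_sqrt (Nat.cast_nonneg T)
  have hT : (0 : ℝ) < T := hrT ▸ by positivity
  set u := min (r * ε) (1 / 8)
  have hu : 0 < u := lt_min hs (by norm_num)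
  have hur : u ≤ r * ε := min_le_left _ _
  have hx : ε * T * (u / (ε * T)) = u := by field_simp
  have key := le_coinL1Dist T hε.le (x := u / (ε * T)) (by positivity)
    (by rw [div_le_one (by positivity)]; nlinarith)
    (by
      rw [div_pow, mul_div_assoc', div_le_one (by positivity)]
      calc T * u ^ 2 ≤ T * (r * ε) ^ 2 := by gcongr
        _ = (ε * T) ^ 2 := by rw [mul_pow, hrT]; ring)
    (by rw [mul_assoc 2, mul_assoc 2, hx]; linarith [min_le_right (r * ε) (1 / 8)])
  rwa [hx] at key

/-- `T` i.i.d. copies of a coin with `Pr[X=0] = 1/2 - ε` are at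
statistical distance at least `min{ε₀, c√T·ε}` from uniform on `{0,1}^T`,
for absolute constants `ε₀, c > 0`. -/
theorem stmt11 : ∃ ε₀ > (0 : ℝ), ∃ c > (0 : ℝ), ∀ (T : ℕ) (ε : ℝ),
    0 ≤ ε → ε ≤ 1 / 2 →
    (1 / 2 : ℝ) * ∑ y : Fin T → Bool,
        |(∏ i, if y i then (1 / 2 + ε) else (1 / 2 - ε)) - (1 / 2 : ℝ) ^ T|
      ≥ min ε₀ (c * Real.sqrt T * ε) := by
  refine ⟨1 / 64, by norm_num, 1 / 8, by norm_num, fun T ε hε _ => ?_⟩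
  have hmin : min (1 / 64) (1 / 8 * Real.sqrt T * ε) = min (Real.sqrt T * ε) (1 / 8) / 8 := by
    rw [min_comm, ← min_div_div_right (by norm_num : (0 : ℝ) ≤ 8)]
    ring_nf
  show 1 / 2 * coinL1Dist T ε ≥ _
  linarith [min_sqrt_mul_div_four_le_coinL1Dist T hε]
end

section
/- Let X and Y be random variables over [M] with Δ(X,Y) ≥ ε, and let X⃗ and Y⃗ denote T i.i.d. copies of X and of Y respectively. Then there exist absolute constants ε₀ > 0 and c > 0 such that Δ(X⃗, Y⃗) ≥ min{ε₀, c·√T·ε}. -/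
/-!
Put `A = {x | q x ≤ p x}`, `a = p(A)` and `b = q(A)`, so that `a - b = Δ(p, q)`. Counting the
coordinates that fall into `A` pushes the product laws forward to `Bin(T, a)` and `Bin(T, b)`,
which can only decrease the distance.

For the binomial laws write `T = n + 1`. The distribution function `F_j(t) = P(Bin(T, t) ≤ j)` has
derivative `-T · P(Bin(n, t) = j)`. Let `K` be the set of the `j ≤ n` lying within `√T` of
`n · [b, a]`, so `|K| ≤ T (a - b) + 3√T`. By the mean value theorem there is `ξ ∈ (b, a)` with
`∑_{j ∈ K} (F_j(b) - F_j(a)) = T (a - b) P(Bin(n, ξ) ∈ K)`, and Chebyshev's inequality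
(variance `n ξ (1 - ξ) ≤ T / 4`) bounds the probability below by `3/4`. Each `F_j(b) - F_j(a)` is at
most `Δ(Bin(T, a), Bin(T, b))`, hence `(3/4) T (a - b) ≤ (T (a - b) + 3√T) Δ`, which gives
`Δ ≥ min (1/8) (√T (a - b) / 8)`.
-/

open Finset Polynomial

section FiniteSums

variable {ι : Type*} {s t : Finset ι} {f g : ι → ℝ}

lemma sum_sub_le_half_sum_abs_sub (hts : t ⊆ s) (h : ∑ i ∈ s, f i = ∑ i ∈ s, g i) :
    ∑ i ∈ t, (f i - g i) ≤ 1 / 2 * ∑ i ∈ s, |f i - g i| := by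
  classical
  have hzero : ∑ i ∈ s \ t, (f i - g i) + ∑ i ∈ t, (f i - g i) = 0 := by
    rw [sum_sdiff hts, sum_sub_distrib, h, sub_self]
  have hin : ∑ i ∈ t, (f i - g i) ≤ ∑ i ∈ t, |f i - g i| :=
    sum_le_sum fun i _ => le_abs_self _
  have hout : -∑ i ∈ s \ t, (f i - g i) ≤ ∑ i ∈ s \ t, |f i - g i| := by
    rw [← sum_neg_distrib]; exact sum_le_sum fun i _ => neg_le_abs _
  have hsplit := sum_sdiff hts (f := fun i => |f i - g i|)
  linarith

lemma sum_abs_sub_eq_two_mul_sum_filter [DecidablePred fun i => g i ≤ f i]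
    (h : ∑ i ∈ s, f i = ∑ i ∈ s, g i) :
    ∑ i ∈ s, |f i - g i| = 2 * ∑ i ∈ s with g i ≤ f i, (f i - g i) := by
  have hzero : ∑ i ∈ s, (f i - g i) = 0 := by rw [sum_sub_distrib, h, sub_self]
  rw [← sum_filter_add_sum_filter_not s (fun i => g i ≤ f i)] at hzero ⊢
  have hneg : ∑ i ∈ s with ¬ g i ≤ f i, |f i - g i| = -∑ i ∈ s with ¬ g i ≤ f i, (f i - g i) := by
    rw [← sum_neg_distrib]
    exact sum_congr rfl fun i hi => abs_of_neg (by simp at hi; linarith)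
  rw [hneg, sum_congr rfl fun i hi => abs_of_nonneg (by simp at hi; linarith)]
  linarith

lemma sum_abs_sum_fiberwise_le {α β : Type*} [Fintype α] [Fintype β] [DecidableEq β]
    (φ : α → β) (f : α → ℝ) :
    ∑ b, |∑ a with φ a = b, f a| ≤ ∑ a, |f a| :=
  calc ∑ b, |∑ a with φ a = b, f a| ≤ ∑ b, ∑ a with φ a = b, |f a| :=
        sum_le_sum fun _ _ => abs_sum_le_sum_abs _ _
    _ = ∑ a, |f a| := sum_fiberwise _ _ _

end FiniteSums

lemma card_filter_le_sub_add_one (s : Finset ℕ) {L R : ℝ} (hLR : L ≤ R) (hR : 0 ≤ R) :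
    (#(s.filter fun j : ℕ => L ≤ j ∧ (j : ℝ) ≤ R) : ℝ) ≤ R - L + 1 := by
  have hsub : s.filter (fun j : ℕ => L ≤ j ∧ (j : ℝ) ≤ R) ⊆ Icc ⌈L⌉₊ ⌊R⌋₊ := fun j hj => by
    rw [mem_filter] at hj
    exact mem_Icc.2 ⟨Nat.ceil_le.2 hj.2.1, Nat.le_floor hj.2.2⟩
  have hcard : (#(Icc ⌈L⌉₊ ⌊R⌋₊) : ℝ) ≤ R - L + 1 := by
    rw [Nat.card_Icc]
    rcases le_total ⌈L⌉₊ (⌊R⌋₊ + 1) with h | h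
    · rw [Nat.cast_sub h]
      push_cast
      linarith [Nat.floor_le hR, Nat.le_ceil L]
    · rw [Nat.sub_eq_zero_of_le h]
      push_cast
      linarith
  exact le_trans (by exact_mod_cast card_le_card hsub) hcard

section Bernstein

variable {t : ℝ}

lemma bernsteinPolynomial_eval_nonneg (n ν : ℕ) (h0 : 0 ≤ t) (h1 : t ≤ 1) :
    0 ≤ (bernsteinPolynomial ℝ n ν).eval t := by
  have : 0 ≤ 1 - t := sub_nonneg.2 h1
  simp only [bernsteinPolynomial, eval_mul, eval_pow, eval_sub, eval_one, eval_X, eval_natCast]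
  positivity

lemma sum_bernsteinPolynomial_eval (n : ℕ) (t : ℝ) :
    ∑ ν ∈ range (n + 1), (bernsteinPolynomial ℝ n ν).eval t = 1 := by
  simpa [eval_finsetSum] using congrArg (eval t) (bernsteinPolynomial.sum ℝ n)

lemma sum_sq_mul_bernsteinPolynomial_eval (n : ℕ) (t : ℝ) :
    ∑ ν ∈ range (n + 1), (n * t - ν) ^ 2 * (bernsteinPolynomial ℝ n ν).eval t
      = n * t * (1 - t) := by
  simpa [eval_finsetSum] using congrArg (eval t) (bernsteinPolynomial.variance ℝ n)

lemma one_sub_div_sq_le_sum_bernsteinPolynomial_eval {n : ℕ} (h0 : 0 ≤ t) (h1 : t ≤ 1) {s : ℝ}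
    (hs : 0 < s) {K : Finset ℕ} (hK : ∀ ν ∈ range (n + 1), |n * t - ν| < s → ν ∈ K) :
    1 - n * t * (1 - t) / s ^ 2 ≤ ∑ ν ∈ K, (bernsteinPolynomial ℝ n ν).eval t := by
  classical
  set B := fun ν => (bernsteinPolynomial ℝ n ν).eval t
  have hB : ∀ ν, 0 ≤ B ν := fun ν => bernsteinPolynomial_eval_nonneg n ν h0 h1
  have hsplit : ∑ ν ∈ range (n + 1) ∩ K, B ν + ∑ ν ∈ range (n + 1) \ K, B ν = 1 := by
    rw [sum_inter_add_sum_sdiff, sum_bernsteinPolynomial_eval]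
  have htail : ∑ ν ∈ range (n + 1) \ K, B ν ≤ n * t * (1 - t) / s ^ 2 :=
    calc ∑ ν ∈ range (n + 1) \ K, B ν
        ≤ ∑ ν ∈ range (n + 1) \ K, (n * t - ν) ^ 2 / s ^ 2 * B ν := by
          refine sum_le_sum fun ν hν => le_mul_of_one_le_left (hB ν) ?_
          rw [mem_sdiff] at hν
          rw [one_le_div (by positivity), ← sq_abs (_ - _)]
          exact pow_le_pow_left₀ hs.le (not_lt.1 (mt (hK ν hν.1) hν.2)) 2
      _ ≤ ∑ ν ∈ range (n + 1), (n * t - ν) ^ 2 / s ^ 2 * B ν :=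
          sum_le_sum_of_subset_of_nonneg sdiff_subset fun ν _ _ => by have := hB ν; positivity
      _ = n * t * (1 - t) / s ^ 2 := by
          rw [← sum_sq_mul_bernsteinPolynomial_eval, sum_div]
          exact sum_congr rfl fun ν _ => by ring
  have hcore : ∑ ν ∈ range (n + 1) ∩ K, B ν ≤ ∑ ν ∈ K, B ν :=
    sum_le_sum_of_subset_of_nonneg inter_subset_right fun ν _ _ => hB ν
  linarith

lemma derivative_sum_range_bernsteinPolynomial (R : Type*) [CommRing R] (n k : ℕ) :
    derivative (∑ ν ∈ range (k + 1), bernsteinPolynomial R (n + 1) ν)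
      = -((n : R[X]) + 1) * bernsteinPolynomial R n k := by
  induction k with
  | zero => simp [bernsteinPolynomial.derivative_zero]
  | succ k ih =>
    rw [sum_range_succ, derivative_add, ih, bernsteinPolynomial.derivative_succ]
    push_cast
    ring

lemma exists_mem_Ioo_sum_bernsteinPolynomial_eval_sub_eq (n : ℕ) (K : Finset ℕ) {a b : ℝ}
    (hba : b < a) :
    ∃ ξ ∈ Set.Ioo b a, ∑ j ∈ K, ∑ k ∈ range (j + 1),
        ((bernsteinPolynomial ℝ (n + 1) k).eval b - (bernsteinPolynomial ℝ (n + 1) k).eval a)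
      = (n + 1) * (a - b) * ∑ j ∈ K, (bernsteinPolynomial ℝ n j).eval ξ := by
  -- `P.eval t = ∑ j ∈ K, P(Bin(n + 1, t) ≤ j)`
  set P := ∑ j ∈ K, ∑ k ∈ range (j + 1), bernsteinPolynomial ℝ (n + 1) k
  have hP : derivative P = ∑ j ∈ K, -((n : ℝ[X]) + 1) * bernsteinPolynomial ℝ n j := by
    rw [derivative_sum]
    exact sum_congr rfl fun j _ => derivative_sum_range_bernsteinPolynomial ℝ n j
  obtain ⟨ξ, hξ, hslope⟩ := exists_hasDerivAt_eq_slope (fun t => P.eval t)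
    (fun t => (derivative P).eval t) hba P.continuous.continuousOn fun t _ => P.hasDerivAt t
  refine ⟨ξ, hξ, ?_⟩
  rw [eq_div_iff (sub_ne_zero.2 hba.ne')] at hslope
  simp only [hP, P, eval_finsetSum, eval_mul, eval_neg, eval_add, eval_natCast, eval_one,
    ← mul_sum] at hslope
  simp only [sum_sub_distrib]
  linear_combination hslope

end Bernstein

/-- `(bernsteinPolynomial ℝ n k).eval t` is the probability that `Bin(n, t)` takes the value `k`. -/
noncomputable def binomialTV (n : ℕ) (a b : ℝ) : ℝ :=
  1 / 2 * ∑ k ∈ range (n + 1),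
    |(bernsteinPolynomial ℝ n k).eval a - (bernsteinPolynomial ℝ n k).eval b|

lemma binomialTV_nonneg (n : ℕ) (a b : ℝ) : 0 ≤ binomialTV n a b := by
  unfold binomialTV; positivity

lemma sum_range_bernsteinPolynomial_eval_sub_le_binomialTV {j n : ℕ} (hj : j ≤ n) (a b : ℝ) :
    ∑ k ∈ range (j + 1), ((bernsteinPolynomial ℝ n k).eval b - (bernsteinPolynomial ℝ n k).eval a)
      ≤ binomialTV n a b := by
  unfold binomialTV
  simp only [abs_sub_comm ((bernsteinPolynomial ℝ n _).eval a)]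
  exact sum_sub_le_half_sum_abs_sub (range_subset_range.2 (by omega))
    (by rw [sum_bernsteinPolynomial_eval, sum_bernsteinPolynomial_eval])

lemma three_div_four_mul_le_mul_binomialTV {a b : ℝ} (hb : 0 ≤ b) (hba : b < a) (ha : a ≤ 1)
    (n : ℕ) :
    3 / 4 * ((n + 1) * (a - b))
      ≤ ((n + 1) * (a - b) + 3 * √(n + 1)) * binomialTV (n + 1) a b := by
  set s := √((n : ℝ) + 1)
  have hs2 : s ^ 2 = n + 1 := Real.sq_sqrt (by positivity)
  have hs1 : 1 ≤ s := Real.one_le_sqrt.2 (by linarith [n.cast_nonneg (α := ℝ)])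
  set K := (range (n + 1)).filter fun j : ℕ => n * b - s ≤ j ∧ (j : ℝ) ≤ n * a + s
  obtain ⟨ξ, ⟨hbξ, hξa⟩, hslope⟩ := exists_mem_Ioo_sum_bernsteinPolynomial_eval_sub_eq n K hba
  have hcheb : 3 / 4 ≤ ∑ j ∈ K, (bernsteinPolynomial ℝ n j).eval ξ := by
    refine le_trans ?_ (one_sub_div_sq_le_sum_bernsteinPolynomial_eval (by linarith) (by linarith)
      (s := s) (by positivity) fun j hj hjξ => ?_)
    · have : n * ξ * (1 - ξ) / s ^ 2 ≤ 1 / 4 := by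
        rw [hs2, div_le_iff₀ (by positivity)]
        nlinarith [sq_nonneg (ξ - 1 / 2), n.cast_nonneg (α := ℝ)]
      linarith
    · have := abs_lt.1 hjξ
      have : (n : ℝ) * b ≤ n * ξ := by gcongr
      have : (n : ℝ) * ξ ≤ n * a := by gcongr
      exact mem_filter.2 ⟨hj, by linarith, by linarith⟩
  have hupper : ∑ j ∈ K, ∑ k ∈ range (j + 1),
      ((bernsteinPolynomial ℝ (n + 1) k).eval b - (bernsteinPolynomial ℝ (n + 1) k).eval a)
        ≤ #K * binomialTV (n + 1) a b := by
    rw [← nsmul_eq_mul, ← sum_const]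
    exact sum_le_sum fun j hj => sum_range_bernsteinPolynomial_eval_sub_le_binomialTV
      (by have := (mem_range.1 (mem_filter.1 hj).1); omega) a b
  have hcard : (#K : ℝ) ≤ (n + 1) * (a - b) + 3 * s := by
    have hn : (0 : ℝ) ≤ n := n.cast_nonneg
    have := card_filter_le_sub_add_one (range (n + 1)) (L := n * b - s) (R := n * a + s)
      (by nlinarith) (by nlinarith)
    nlinarith
  calc 3 / 4 * ((n + 1) * (a - b))
      ≤ (n + 1) * (a - b) * ∑ j ∈ K, (bernsteinPolynomial ℝ n j).eval ξ := by
        rw [mul_comm]; gcongr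
    _ ≤ #K * binomialTV (n + 1) a b := hslope ▸ hupper
    _ ≤ _ := by gcongr; exact binomialTV_nonneg _ _ _

lemma min_le_binomialTV {a b : ℝ} (hb : 0 ≤ b) (hba : b ≤ a) (ha : a ≤ 1) (T : ℕ) :
    min (1 / 8) (1 / 8 * √T * (a - b)) ≤ binomialTV T a b := by
  rcases hba.eq_or_lt with rfl | hba
  · simpa using binomialTV_nonneg T b b
  obtain _ | n := T
  · simpa using binomialTV_nonneg 0 a b
  have key := three_div_four_mul_le_mul_binomialTV hb hba ha n
  push_cast
  set s := √((n : ℝ) + 1)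
  set V := binomialTV (n + 1) a b
  have hs : 0 < s := by positivity
  have hs2 : s ^ 2 = n + 1 := Real.sq_sqrt (by positivity)
  have hV := binomialTV_nonneg (n + 1) a b
  rcases le_or_gt ((n + 1) * (a - b)) s with h | h
  · refine min_le_of_right_le ?_
    have : 3 / 4 * (s ^ 2 * (a - b)) ≤ 4 * s * V := by rw [hs2]; nlinarith
    nlinarith
  · refine min_le_of_left_le ?_
    nlinarith

section Product

variable {ι α : Type*} [Fintype ι] [DecidableEq ι] [Fintype α] [DecidableEq α]

lemma sum_prod_of_filter_mem_eq (f : α → ℝ) (A : Finset α) (I : Finset ι) :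
    ∑ y : ι → α with univ.filter (fun i => y i ∈ A) = I, ∏ i, f (y i)
      = (∑ x ∈ A, f x) ^ #I * (∑ x ∈ Aᶜ, f x) ^ (Fintype.card ι - #I) := by
  have hfiber : univ.filter (fun y : ι → α => univ.filter (fun i => y i ∈ A) = I)
      = Fintype.piFinset fun i => if i ∈ I then A else Aᶜ := by
    ext y
    simp only [mem_filter, mem_univ, true_and, Fintype.mem_piFinset, Finset.ext_iff]
    refine forall_congr' fun i => ?_
    split_ifs with hi <;> simp [hi]
  rw [hfiber, ← prod_univ_sum]
  simp only [apply_ite (fun s : Finset α => ∑ x ∈ s, f x)]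
  rw [prod_ite, prod_const, prod_const, filter_mem_eq_inter,
    univ_inter, filter_not, filter_mem_eq_inter, univ_inter, ← compl_eq_univ_sdiff, card_compl]

lemma binomialTV_le_half_sum_abs_sub_prod {p q : α → ℝ}
    (hp : ∑ x, p x = 1) (hq : ∑ x, q x = 1) (A : Finset α) :
    binomialTV (Fintype.card ι) (∑ x ∈ A, p x) (∑ x ∈ A, q x)
      ≤ 1 / 2 * ∑ y : ι → α, |∏ i, p (y i) - ∏ i, q (y i)| := by
  unfold binomialTV
  gcongr 1 / 2 * ?_
  have hcompl : ∀ f : α → ℝ, ∑ x, f x = 1 → ∑ x ∈ Aᶜ, f x = 1 - ∑ x ∈ A, f x := fun f hf => by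
    rw [← hf, ← sum_add_sum_compl A f, add_sub_cancel_left]
  have hfiber : ∀ I : Finset ι,
      ∑ y : ι → α with univ.filter (fun i => y i ∈ A) = I, (∏ i, p (y i) - ∏ i, q (y i))
      = (∑ x ∈ A, p x) ^ #I * (1 - ∑ x ∈ A, p x) ^ (Fintype.card ι - #I)
        - (∑ x ∈ A, q x) ^ #I * (1 - ∑ x ∈ A, q x) ^ (Fintype.card ι - #I) := fun I => by
    rw [sum_sub_distrib, sum_prod_of_filter_mem_eq, sum_prod_of_filter_mem_eq, hcompl p hp,
      hcompl q hq]
  refine le_of_eq_of_le ?_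
    (sum_abs_sum_fiberwise_le (fun y : ι → α => univ.filter (fun i => y i ∈ A)) _)
  simp only [hfiber]
  rw [← powerset_univ, sum_powerset_apply_card (fun k => |(∑ x ∈ A, p x) ^ k *
    (1 - ∑ x ∈ A, p x) ^ (Fintype.card ι - k) - (∑ x ∈ A, q x) ^ k * (1 - ∑ x ∈ A, q x) ^
      (Fintype.card ι - k)|), card_univ]
  refine sum_congr rfl fun k _ => ?_
  rw [nsmul_eq_mul, ← abs_of_nonneg (Nat.cast_nonneg (α := ℝ) ((Fintype.card ι).choose k)),
    ← abs_mul]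
  simp only [bernsteinPolynomial, eval_mul, eval_pow, eval_sub, eval_one, eval_X, eval_natCast]
  ring_nf

end Product

/-- if `Δ(X,Y) ≥ ε`, then `T` i.i.d. copies satisfy
`Δ(X⃗, Y⃗) ≥ min{ε₀, c√T·ε}` for absolute constants `ε₀, c > 0`. -/
theorem stmt12 : ∃ ε₀ > (0 : ℝ), ∃ c > (0 : ℝ),
    ∀ (M T : ℕ) (p q : Fin M → ℝ) (ε : ℝ),
    (∀ x, 0 ≤ p x) → (∑ x, p x = 1) →
    (∀ x, 0 ≤ q x) → (∑ x, q x = 1) →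
    (1 / 2 : ℝ) * ∑ x, |p x - q x| ≥ ε →
    (1 / 2 : ℝ) * ∑ y : Fin T → Fin M, |(∏ i, p (y i)) - ∏ i, q (y i)|
      ≥ min ε₀ (c * Real.sqrt T * ε) := by
  refine ⟨1 / 8, by norm_num, 1 / 8, by norm_num, fun M T p q ε hp0 hp1 hq0 hq1 hε => ?_⟩
  set A := univ.filter fun x => q x ≤ p x
  have hδ : 1 / 2 * ∑ x, |p x - q x| = ∑ x ∈ A, p x - ∑ x ∈ A, q x := by
    rw [sum_abs_sub_eq_two_mul_sum_filter (hp1.trans hq1.symm), sum_sub_distrib]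
    ring
  have hδ0 : 0 ≤ ∑ x ∈ A, p x - ∑ x ∈ A, q x := hδ ▸ by positivity
  have hq : 0 ≤ ∑ x ∈ A, q x := sum_nonneg fun x _ => hq0 x
  have hp : ∑ x ∈ A, p x ≤ 1 := hp1 ▸ sum_le_univ_sum_of_nonneg hp0
  have hproj := binomialTV_le_half_sum_abs_sub_prod (ι := Fin T) hp1 hq1 A
  rw [Fintype.card_fin] at hproj
  calc min (1 / 8) (1 / 8 * √T * ε)
      ≤ min (1 / 8) (1 / 8 * √T * (∑ x ∈ A, p x - ∑ x ∈ A, q x)) := by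
        rw [← hδ]; gcongr
    _ ≤ binomialTV T (∑ x ∈ A, p x) (∑ x ∈ A, q x) :=
        min_le_binomialTV hq (sub_nonneg.1 hδ0) hp T
    _ ≤ _ := hproj
end

section
/- Let X and Y be random variables over [M] with Δ(X,Y) ≥ ε, and let X⃗ and Y⃗ denote T i.i.d. copies of X and of Y respectively. Then Δ(X⃗, Y⃗) ≥ 1 − e^{−Tε²/2}. -/
open Finset

lemma abs_sub_eq_min' (a b : ℝ) : |a - b| = a + b - 2 * min a b := by
  rcases le_total a b with h | h
  · rw [abs_of_nonpos (by linarith), min_eq_left h]; ring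
  · rw [abs_of_nonneg (by linarith), min_eq_right h]; ring

lemma tv_eq_min' {α : Type*} [Fintype α] (f g : α → ℝ)
    (hf : ∑ x, f x = 1) (hg : ∑ x, g x = 1) :
    (1/2 : ℝ) * ∑ x, |f x - g x| = 1 - ∑ x, min (f x) (g x) := by
  have h : ∑ x, |f x - g x| = ∑ x, (f x + g x - 2 * min (f x) (g x)) := by
    simp [abs_sub_eq_min']
  rw [h, Finset.sum_sub_distrib, Finset.sum_add_distrib, ← Finset.mul_sum, hf, hg]
  ring

/-- if `Δ(X,Y) ≥ ε`, then `T` i.i.d. copies satisfy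
`Δ(X⃗, Y⃗) ≥ 1 - e^{-Tε²/2}`. -/
theorem stmt13 {M T : ℕ} (p q : Fin M → ℝ) (ε : ℝ) (hε : 0 ≤ ε)
    (hp0 : ∀ x, 0 ≤ p x) (hp1 : ∑ x, p x = 1)
    (hq0 : ∀ x, 0 ≤ q x) (hq1 : ∑ x, q x = 1)
    (hsd : (1 / 2 : ℝ) * ∑ x, |p x - q x| ≥ ε) :
    (1 / 2 : ℝ) * ∑ y : Fin T → Fin M, |(∏ i, p (y i)) - ∏ i, q (y i)|
      ≥ 1 - Real.exp (-(T * ε ^ 2) / 2) := by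
  classical
  set a : Fin M → ℝ := fun x => Real.sqrt (p x) with ha
  set b : Fin M → ℝ := fun x => Real.sqrt (q x) with hb
  have ha0 : ∀ x, 0 ≤ a x := fun x => Real.sqrt_nonneg _
  have hb0 : ∀ x, 0 ≤ b x := fun x => Real.sqrt_nonneg _
  have ha2 : ∀ x, a x ^ 2 = p x := fun x => Real.sq_sqrt (hp0 x)
  have hb2 : ∀ x, b x ^ 2 = q x := fun x => Real.sq_sqrt (hq0 x)
  set BC : ℝ := ∑ x, a x * b x with hBC
  have hBC0 : 0 ≤ BC := Finset.sum_nonneg fun x _ => mul_nonneg (ha0 x) (hb0 x)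
  -- Cauchy-Schwarz : (∑ |p - q|)² ≤ (2 - 2BC)(2 + 2BC)
  have habs : ∀ x, |p x - q x| = |a x - b x| * (a x + b x) := by
    intro x
    have : p x - q x = (a x - b x) * (a x + b x) := by
      have := ha2 x; have := hb2 x; nlinarith
    rw [this, abs_mul, abs_of_nonneg (add_nonneg (ha0 x) (hb0 x))]
  have hsumfsq : ∑ x, |a x - b x| ^ 2 = 2 - 2 * BC := by
    have : ∀ x, |a x - b x| ^ 2 = p x + q x - 2 * (a x * b x) := by
      intro x; rw [sq_abs]; have := ha2 x; have := hb2 x; nlinarith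
    rw [Finset.sum_congr rfl fun x _ => this x]
    rw [Finset.sum_sub_distrib, Finset.sum_add_distrib, ← Finset.mul_sum, hp1, hq1, hBC]
    ring
  have hsumgsq : ∑ x, (a x + b x) ^ 2 = 2 + 2 * BC := by
    have : ∀ x, (a x + b x) ^ 2 = p x + q x + 2 * (a x * b x) := by
      intro x; have := ha2 x; have := hb2 x; nlinarith
    rw [Finset.sum_congr rfl fun x _ => this x]
    rw [Finset.sum_add_distrib, Finset.sum_add_distrib, ← Finset.mul_sum, hp1, hq1, hBC]
    ring
  have hCS : (∑ x, |p x - q x|) ^ 2 ≤ (2 - 2 * BC) * (2 + 2 * BC) := by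
    calc (∑ x, |p x - q x|) ^ 2
        = (∑ x, |a x - b x| * (a x + b x)) ^ 2 := by
          rw [Finset.sum_congr rfl fun x _ => habs x]
      _ ≤ (∑ x, |a x - b x| ^ 2) * ∑ x, (a x + b x) ^ 2 :=
          Finset.sum_mul_sq_le_sq_mul_sq _ _ _
      _ = (2 - 2 * BC) * (2 + 2 * BC) := by rw [hsumfsq, hsumgsq]
  have hsum_abs_ge : (2 : ℝ) * ε ≤ ∑ x, |p x - q x| := by linarith
  have hBCsq : BC ^ 2 ≤ 1 - ε ^ 2 := by nlinarith [sq_nonneg (∑ x, |p x - q x|)]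
  -- sums of products
  have hPsum : ∑ y : Fin T → Fin M, ∏ i, p (y i) = 1 := by
    rw [← Fintype.sum_pow, hp1, one_pow]
  have hQsum : ∑ y : Fin T → Fin M, ∏ i, q (y i) = 1 := by
    rw [← Fintype.sum_pow, hq1, one_pow]
  have hminsum : ∑ y : Fin T → Fin M, min (∏ i, p (y i)) (∏ i, q (y i)) ≤ BC ^ T := by
    rw [hBC, Fintype.sum_pow]
    apply Finset.sum_le_sum
    intro y _
    set A := ∏ i, p (y i) with hA
    set B := ∏ i, q (y i) with hB'
    set C := ∏ i, a (y i) * b (y i) with hC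
    have hA0 : 0 ≤ A := Finset.prod_nonneg fun i _ => hp0 _
    have hB0 : 0 ≤ B := Finset.prod_nonneg fun i _ => hq0 _
    have hC0 : 0 ≤ C := Finset.prod_nonneg fun i _ => mul_nonneg (ha0 _) (hb0 _)
    have hC2 : C ^ 2 = A * B := by
      rw [hC, ← Finset.prod_pow, hA, hB', ← Finset.prod_mul_distrib]
      exact Finset.prod_congr rfl fun i _ => by rw [mul_pow, ha2, hb2]
    have hm0 : 0 ≤ min A B := le_min hA0 hB0
    have hmsq : min A B ^ 2 ≤ C ^ 2 := by
      rw [hC2, sq]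
      exact mul_le_mul (min_le_left _ _) (min_le_right _ _) hm0 hA0
    exact (pow_le_pow_iff_left₀ hm0 hC0 two_ne_zero).mp hmsq
  -- bound BC ^ T
  have hT : (BC : ℝ) ^ T ≤ Real.exp (-(T * ε ^ 2) / 2) := by
    have h1 : (BC ^ T) ^ 2 ≤ Real.exp (-(T * ε ^ 2) / 2) ^ 2 := by
      have e1 : (BC ^ T) ^ 2 = (BC ^ 2) ^ T := by ring
      have e2 : Real.exp (-(T * ε ^ 2) / 2) ^ 2 = Real.exp (-(ε ^ 2)) ^ T := by
        rw [← Real.exp_nat_mul, ← Real.exp_nat_mul]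
        congr 1; ring
      rw [e1, e2]
      apply pow_le_pow_left₀ (sq_nonneg _)
      calc BC ^ 2 ≤ 1 - ε ^ 2 := hBCsq
        _ ≤ Real.exp (-(ε ^ 2)) := by
            have := Real.add_one_le_exp (-(ε ^ 2)); linarith
    exact (pow_le_pow_iff_left₀ (pow_nonneg hBC0 T) (Real.exp_pos _).le two_ne_zero).mp h1
  have hfinal := tv_eq_min' (fun y : Fin T → Fin M => ∏ i, p (y i))
    (fun y => ∏ i, q (y i)) hPsum hQsum
  rw [ge_iff_le, hfinal]
  linarith
end

section
/- Let X be a random variable over [M] that is (1−η)-far from uniform in statistical distance, and let β ≥ 1. Then X is (2√(β·η), β)-nonuniform: for every function q:[M]→ℝ with 0 ≤ q(x) ≤ Pr[X=x] for all x and Σ_x q(x) ≥ 2√(β·η), we have Σ_x q(x)² > β/M. -/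
open Finset

set_option maxHeartbeats 1000000 in
/-- if `X` is `(1-η)`-far from uniform on `[M]` and `β ≥ 1`, then
`X` is `(2√(βη), β)`-nonuniform. -/
theorem stmt14 {M : ℕ} (η β : ℝ) (hη : η < 1) (hβ : 1 ≤ β) (hβη : β * η ≤ 1)
    (p : Fin M → ℝ) (hp0 : ∀ x, 0 ≤ p x) (hp1 : ∑ x, p x = 1)
    (hfar : (1 / 2 : ℝ) * ∑ x, |p x - 1 / M| ≥ 1 - η)
    (q : Fin M → ℝ) (hq0 : ∀ x, 0 ≤ q x) (hqp : ∀ x, q x ≤ p x)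
    (hqmass : ∑ x, q x ≥ 2 * Real.sqrt (β * η)) :
    ∑ x, (q x) ^ 2 > β / M := by
  -- M > 0
  have hM : 0 < M := by
    by_contra h
    have : M = 0 := by omega
    subst this
    simp at hp1
  have hMR : (0 : ℝ) < M := by exact_mod_cast hM
  -- η > 0
  have habs : ∑ x, |p x - 1 / M| < 2 := by
    obtain ⟨x0, hx0⟩ : ∃ x : Fin M, 0 < p x := by
      by_contra h
      push_neg at h
      have : ∑ x, p x = 0 := Finset.sum_eq_zero fun x _ => le_antisymm (h x) (hp0 x)
      rw [this] at hp1; norm_num at hp1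
    have hlt : |p x0 - 1 / M| < p x0 + 1 / M := by
      rw [abs_sub_lt_iff]
      constructor <;> nlinarith [one_div_pos.2 hMR]
    have hle : ∀ x ∈ Finset.univ, |p x - 1 / (M:ℝ)| ≤ p x + 1 / M := by
      intro x _
      rw [abs_sub_le_iff]
      constructor <;> nlinarith [one_div_pos.2 hMR, hp0 x]
    calc ∑ x, |p x - 1 / (M:ℝ)| < ∑ x, (p x + 1 / M) :=
          Finset.sum_lt_sum hle ⟨x0, Finset.mem_univ x0, hlt⟩
      _ = 2 := by
          rw [Finset.sum_add_distrib, hp1, Finset.sum_const, Finset.card_univ,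
            Fintype.card_fin, nsmul_eq_mul, mul_one_div, div_self hMR.ne']
          norm_num
  have hη0 : 0 < η := by nlinarith
  -- the heavy set A
  set A : Finset (Fin M) := Finset.univ.filter (fun x => 1 / (M:ℝ) < p x) with hA
  set Ac : Finset (Fin M) := Finset.univ.filter (fun x => ¬ 1 / (M:ℝ) < p x) with hAc
  have hsum0 : ∑ x, (p x - 1 / (M:ℝ)) = 0 := by
    rw [Finset.sum_sub_distrib, hp1, Finset.sum_const, Finset.card_univ,
      Fintype.card_fin, nsmul_eq_mul, mul_one_div, div_self hMR.ne']
    norm_num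
  have hsplit : ∑ x ∈ A, (p x - 1/(M:ℝ)) + ∑ x ∈ Ac, (p x - 1/M)
      = ∑ x, (p x - 1/M) :=
    Finset.sum_filter_add_sum_filter_not _ _ _
  have hsplitabs : ∑ x ∈ A, |p x - 1/(M:ℝ)| + ∑ x ∈ Ac, |p x - 1/M|
      = ∑ x, |p x - 1/M| :=
    Finset.sum_filter_add_sum_filter_not _ _ _
  have habsA : ∑ x ∈ A, |p x - 1 / (M:ℝ)| = ∑ x ∈ A, (p x - 1 / M) := by
    apply Finset.sum_congr rfl
    intro x hx
    rw [hA, Finset.mem_filter] at hx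
    exact abs_of_pos (by linarith [hx.2])
  have habsAc : ∑ x ∈ Ac, |p x - 1 / (M:ℝ)| = -∑ x ∈ Ac, (p x - 1 / M) := by
    rw [← Finset.sum_neg_distrib]
    apply Finset.sum_congr rfl
    intro x hx
    rw [hAc, Finset.mem_filter] at hx
    rw [abs_of_nonpos (by push_neg at hx; linarith [hx.2])]
  set T1 := ∑ x ∈ A, (p x - 1 / (M:ℝ)) with hT1def
  have hzero : T1 + ∑ x ∈ Ac, (p x - 1/(M:ℝ)) = 0 := by
    rw [hsplit]; exact hsum0
  have hT1 : (1 : ℝ) - η ≤ T1 := by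
    have h3 : ∑ x, |p x - 1/(M:ℝ)| = T1 - ∑ x ∈ Ac, (p x - 1/M) := by
      rw [← hsplitabs, habsA, habsAc]; ring
    nlinarith [hfar]
  -- |A| ≤ η M
  have hApsum : ∑ x ∈ A, p x ≤ 1 := by
    rw [← hp1]
    exact Finset.sum_le_sum_of_subset_of_nonneg (Finset.subset_univ A)
      (fun x _ _ => hp0 x)
  have hT1eq : T1 = ∑ x ∈ A, p x - A.card * (1/(M:ℝ)) := by
    rw [hT1def, Finset.sum_sub_distrib, Finset.sum_const, nsmul_eq_mul]
  have hcardA : (A.card : ℝ) ≤ η * M := by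
    have h7 : (A.card : ℝ) * (1/M) ≤ η := by linarith
    have h8 : (A.card : ℝ) = (A.card * (1/M)) * M := by field_simp
    rw [h8]
    exact mul_le_mul_of_nonneg_right h7 hMR.le
  -- mass of q outside A is at most η
  have hcardAc : (Ac.card : ℝ) ≤ M := by
    have := Finset.card_le_card (Finset.subset_univ Ac)
    simp only [Finset.card_univ, Fintype.card_fin] at this
    exact_mod_cast this
  have hb : ∑ x ∈ Ac, q x ≤ η := by
    have h1 : ∑ x ∈ Ac, q x ≤ ∑ x ∈ Ac, p x :=
      Finset.sum_le_sum fun x _ => hqp x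
    have h4 : ∑ x ∈ Ac, (p x - 1/(M:ℝ)) = ∑ x ∈ Ac, p x - Ac.card * (1/(M:ℝ)) := by
      rw [Finset.sum_sub_distrib, Finset.sum_const, nsmul_eq_mul]
    have h6 : (Ac.card : ℝ) * (1/(M:ℝ)) ≤ 1 := by
      rw [mul_one_div, div_le_one hMR]; exact hcardAc
    linarith
  -- mass of q on A
  set a := ∑ x ∈ A, q x with hadef
  have hsq : Real.sqrt η ≤ Real.sqrt (β * η) := by
    apply Real.sqrt_le_sqrt; nlinarith
  have hηsq : η < Real.sqrt η :=
    (Real.lt_sqrt hη0.le).2 (by nlinarith)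
  have hsqpos : 0 < Real.sqrt (β * η) := by
    apply Real.sqrt_pos.2; nlinarith
  have hsum : a + ∑ x ∈ Ac, q x = ∑ x, q x :=
    Finset.sum_filter_add_sum_filter_not _ _ _
  have ha : Real.sqrt (β * η) < a := by
    linarith [hqmass]
  have hane : A.Nonempty := by
    rcases Finset.eq_empty_or_nonempty A with h | h
    · exfalso
      have : a = 0 := by rw [hadef, h]; simp
      linarith
    · exact h
  have hcardpos : (0 : ℝ) < A.card := by
    exact_mod_cast Finset.card_pos.2 hane
  -- Cauchy-Schwarz
  have hCS : a ^ 2 ≤ A.card * ∑ x ∈ A, q x ^ 2 := sq_sum_le_card_mul_sum_sq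
  have hsubset : ∑ x ∈ A, q x ^ 2 ≤ ∑ x, q x ^ 2 :=
    Finset.sum_le_sum_of_subset_of_nonneg (Finset.subset_univ A)
      (fun x _ _ => sq_nonneg _)
  have ha2 : β * η < a ^ 2 := by
    nlinarith [Real.sq_sqrt (show (0:ℝ) ≤ β * η by nlinarith), hsqpos]
  have key : β / M < a ^ 2 / A.card := by
    rw [div_lt_div_iff₀ hMR hcardpos]
    nlinarith [mul_le_mul_of_nonneg_left hcardA (by linarith : (0:ℝ) ≤ β),
      mul_lt_mul_of_pos_right ha2 hMR]
  have hfin : a ^ 2 / A.card ≤ ∑ x ∈ A, q x ^ 2 := by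
    rw [div_le_iff₀ hcardpos]
    nlinarith
  linarith
end

section
/- Let H:[N]→[M] be a random hash function from a hash family 𝓗 of size at most 2^d, let K ≤ N be an integer with K^T ≤ (δ²/(4α)) · M^T / 2^d for reals δ ∈ (0,1), α > 1, and let X be a flat K-source on [N] (uniform on a set of size K). Let X⃗ = (X_1,...,X_T) consist of T independent copies of X. Then Y⃗ = (H(X_1),...,H(X_T)) is (1−δ)-far in statistical distance from every distribution Z⃗ on [M]^T with cp(Z⃗) ≤ α/M^T. -/
/-!
`Y⃗` is a uniform mixture over `|𝓗| ≤ 2^d` hash functions of product distributions, the one for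
`h` being supported on `h(S)^T`; so `Y⃗` lives on a set `A` of at most `2^d K^T ≤ δ²/(4α) M^T`
tuples. By Cauchy–Schwarz, a distribution `Z⃗` with `cp(Z⃗) ≤ α/M^T` gives `A` mass at most
`√(|A| cp(Z⃗)) ≤ δ/2`, and the statistical distance between `Y⃗` and `Z⃗` is at least
`Pr[Y⃗ ∈ A] - Pr[Z⃗ ∈ A] ≥ 1 - δ/2`.
-/

open Finset

section StatisticalDistance

variable {ι : Type*} [Fintype ι] [DecidableEq ι]

lemma two_sub_two_mul_sum_le_sum_abs_sub {p Z : ι → ℝ} {A : Finset ι}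
    (hpA : ∀ y ∉ A, p y = 0) (hp1 : ∑ y, p y = 1) (hZ1 : ∑ y, Z y = 1) :
    2 - 2 * ∑ y ∈ A, Z y ≤ ∑ y, |p y - Z y| := by
  have hpAc : ∑ y ∈ Aᶜ, p y = 0 := sum_eq_zero fun y hy => hpA y (mem_compl.mp hy)
  have hpA1 : ∑ y ∈ A, p y = 1 := by rw [← hp1, ← sum_add_sum_compl A p, hpAc, add_zero]
  have hZAc : ∑ y ∈ Aᶜ, Z y = 1 - ∑ y ∈ A, Z y := by
    rw [← hZ1, ← sum_add_sum_compl A Z, add_sub_cancel_left]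
  have hA : ∑ y ∈ A, (p y - Z y) ≤ ∑ y ∈ A, |p y - Z y| :=
    sum_le_sum fun y _ => le_abs_self _
  have hAc : ∑ y ∈ Aᶜ, (Z y - p y) ≤ ∑ y ∈ Aᶜ, |p y - Z y| :=
    sum_le_sum fun y _ => abs_sub_comm (p y) (Z y) ▸ le_abs_self _
  rw [← sum_add_sum_compl A fun y => |p y - Z y|]
  rw [sum_sub_distrib] at hA hAc
  linarith

end StatisticalDistance

lemma sum_le_of_card_mul_sum_sq_le {ι : Type*} [Fintype ι] {Z : ι → ℝ} {A : Finset ι} {ε : ℝ}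
    (hε : 0 ≤ ε) (h : #A * ∑ y, Z y ^ 2 ≤ ε ^ 2) : ∑ y ∈ A, Z y ≤ ε := by
  have hcp : #A * ∑ y ∈ A, Z y ^ 2 ≤ #A * ∑ y, Z y ^ 2 :=
    mul_le_mul_of_nonneg_left
      (sum_le_sum_of_subset_of_nonneg (subset_univ A) fun y _ _ => sq_nonneg (Z y))
      (Nat.cast_nonneg _)
  exact (le_abs_self _).trans
    (abs_le_of_sq_le_sq (sq_sum_le_card_mul_sum_sq.trans (hcp.trans h)) hε)

section Hashing

variable {H α β ι : Type*} [Fintype H] [DecidableEq β] [Fintype ι] [DecidableEq ι]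

/-- The distribution of `f X` for `X` uniform on `S`. -/
noncomputable def pushFlat (f : α → β) (S : Finset α) (b : β) : ℝ :=
  ∑ x ∈ S, if f x = b then (1 / #S : ℝ) else 0

/-- The distribution of `(h X_i)_i` for `h` uniform on `H` and `X_i` independent and uniform
on `S`. -/
noncomputable def hashedBlock (hash : H → α → β) (S : Finset α) (y : ι → β) : ℝ :=
  (1 / Fintype.card H : ℝ) * ∑ h, ∏ i, pushFlat (hash h) S (y i)

def hashImages (hash : H → α → β) (S : Finset α) : Finset (ι → β) :=
  univ.biUnion fun h => Fintype.piFinset fun _ => S.image (hash h)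

lemma sum_pushFlat [Fintype β] (f : α → β) {S : Finset α} (hS : S.Nonempty) :
    ∑ b, pushFlat f S b = 1 := by
  have hS0 : (#S : ℝ) ≠ 0 := Nat.cast_ne_zero.mpr hS.card_ne_zero
  simp only [pushFlat]
  rw [sum_comm]
  simp [hS0]

lemma pushFlat_eq_zero {f : α → β} {S : Finset α} {b : β} (hb : b ∉ S.image f) :
    pushFlat f S b = 0 :=
  sum_eq_zero fun x hx => if_neg fun hfx => hb (mem_image.mpr ⟨x, hx, hfx⟩)

lemma sum_hashedBlock [Fintype β] [Nonempty H] (hash : H → α → β) {S : Finset α} (hS : S.Nonempty) :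
    ∑ y : ι → β, hashedBlock hash S y = 1 := by
  have hH : (Fintype.card H : ℝ) ≠ 0 := Nat.cast_ne_zero.mpr Fintype.card_ne_zero
  have hprod (h : H) : ∑ y : ι → β, ∏ i, pushFlat (hash h) S (y i) = 1 := by
    rw [← Fintype.prod_sum fun _ b => pushFlat (hash h) S b]
    simp [sum_pushFlat _ hS]
  simp only [hashedBlock]
  rw [← mul_sum, sum_comm, sum_congr rfl fun h _ => hprod h, sum_const, card_univ,
    nsmul_one, one_div_mul_cancel hH]

lemma hashedBlock_eq_zero {hash : H → α → β} {S : Finset α} {y : ι → β}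
    (hy : y ∉ hashImages hash S) : hashedBlock hash S y = 0 := by
  suffices ∀ h, ∏ i, pushFlat (hash h) S (y i) = 0 by simp [hashedBlock, this]
  intro h
  have : ∃ i, y i ∉ S.image (hash h) := by
    by_contra! hall
    exact hy (mem_biUnion.mpr ⟨h, mem_univ h, Fintype.mem_piFinset.mpr hall⟩)
  obtain ⟨i, hi⟩ := this
  exact prod_eq_zero (mem_univ i) (pushFlat_eq_zero hi)

lemma card_hashImages_le (hash : H → α → β) (S : Finset α) :
    #(hashImages (ι := ι) hash S) ≤ Fintype.card H * #S ^ Fintype.card ι := by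
  calc #(hashImages (ι := ι) hash S)
      ≤ ∑ h, #(Fintype.piFinset fun _ : ι => S.image (hash h)) := card_biUnion_le
    _ ≤ ∑ _h : H, #S ^ Fintype.card ι := sum_le_sum fun h _ => by
        rw [Fintype.card_piFinset]
        exact prod_le_pow_card _ _ _ fun _ _ => card_image_le
    _ = Fintype.card H * #S ^ Fintype.card ι := by simp

end Hashing

theorem stmt16_general {N M T : ℕ} {Hfam : Type} [Fintype Hfam] [Nonempty Hfam]
    (d : ℝ) (hcard : (Fintype.card Hfam : ℝ) ≤ 2 ^ d)
    (hash : Hfam → Fin N → Fin M)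
    (δ α : ℝ) (hδ0 : 0 < δ) (hα : 1 < α)
    (K : ℕ) (hK : 0 < K)
    (hKT : (K : ℝ) ^ T ≤ δ ^ 2 / (4 * α) * (M : ℝ) ^ T / 2 ^ d)
    (S : Finset (Fin N)) (hS : S.card = K)
    (Z : (Fin T → Fin M) → ℝ) (hZ1 : ∑ y, Z y = 1)
    (hZcp : ∑ y, (Z y) ^ 2 ≤ α / (M : ℝ) ^ T) :
    (1 / 2 : ℝ) * ∑ y : Fin T → Fin M,
      |(1 / Fintype.card Hfam : ℝ) * ∑ hh : Hfam,
          ∏ i, (∑ x ∈ S, if hash hh x = y i then (1 / K : ℝ) else 0)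
        - Z y| ≥ 1 - δ := by
  subst hS
  obtain ⟨x₀, hx₀⟩ := card_pos.mp hK
  have hMT : (0 : ℝ) < (M : ℝ) ^ T := pow_pos (Nat.cast_pos.mpr (hash (Classical.arbitrary Hfam) x₀).pos) T
  set A : Finset (Fin T → Fin M) := hashImages hash S
  have hA : (#A : ℝ) ≤ δ ^ 2 / (4 * α) * (M : ℝ) ^ T := by
    have hA' : (#A : ℝ) ≤ Fintype.card Hfam * (#S : ℝ) ^ T := by
      exact_mod_cast (card_hashImages_le hash S).trans_eq (by rw [Fintype.card_fin])
    calc (#A : ℝ) ≤ 2 ^ d * (δ ^ 2 / (4 * α) * (M : ℝ) ^ T / 2 ^ d) :=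
          hA'.trans (mul_le_mul hcard hKT (by positivity) (by positivity))
      _ = δ ^ 2 / (4 * α) * (M : ℝ) ^ T := mul_div_cancel₀ _ (by positivity)
  have hZA : ∑ y ∈ A, Z y ≤ δ / 2 := by
    refine sum_le_of_card_mul_sum_sq_le (by positivity) ?_
    calc (#A : ℝ) * ∑ y, Z y ^ 2 ≤ δ ^ 2 / (4 * α) * (M : ℝ) ^ T * (α / (M : ℝ) ^ T) :=
          mul_le_mul hA hZcp (sum_nonneg fun y _ => sq_nonneg _) (by positivity)
      _ = (δ / 2) ^ 2 := by field_simp; ring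
  have hTV := two_sub_two_mul_sum_le_sum_abs_sub (fun y hy => hashedBlock_eq_zero hy)
    (sum_hashedBlock hash ⟨x₀, hx₀⟩) hZ1
  simp only [hashedBlock, pushFlat] at hTV
  linarith

/-- Theorem for hashed values only, large hash family: if
`|𝓗| ≤ 2^d`, `K^T ≤ (δ²/(4α))·M^T/2^d`, and `X⃗` consists of `T` independent
copies of a flat `K`-source, then `Y⃗ = (H(X_1),...,H(X_T))` is `(1-δ)`-far
from every distribution `Z⃗` with `cp(Z⃗) ≤ α/M^T`. -/
theorem stmt16 {N M T : ℕ} {Hfam : Type} [Fintype Hfam] [Nonempty Hfam]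
    (d : ℝ) (hcard : (Fintype.card Hfam : ℝ) ≤ 2 ^ d)
    (hash : Hfam → Fin N → Fin M)
    (δ α : ℝ) (hδ0 : 0 < δ) (hδ1 : δ < 1) (hα : 1 < α)
    (K : ℕ) (hK : 0 < K) (hKN : K ≤ N)
    (hKT : (K : ℝ) ^ T ≤ δ ^ 2 / (4 * α) * (M : ℝ) ^ T / 2 ^ d)
    (S : Finset (Fin N)) (hS : S.card = K)
    (Z : (Fin T → Fin M) → ℝ) (hZ0 : ∀ y, 0 ≤ Z y) (hZ1 : ∑ y, Z y = 1)
    (hZcp : ∑ y, (Z y) ^ 2 ≤ α / (M : ℝ) ^ T) :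
    (1 / 2 : ℝ) * ∑ y : Fin T → Fin M,
      |(1 / Fintype.card Hfam : ℝ) * ∑ hh : Hfam,
          ∏ i, (∑ x ∈ S, if hash hh x = y i then (1 / K : ℝ) else 0)
        - Z y| ≥ 1 - δ :=
  stmt16_general d hcard hash δ α hδ0 hα K hK hKT S hS Z hZ1 hZcp
end

section
/- Let (H,Y) be a joint distribution over 𝓗 × [M] whose marginal H is uniform over 𝓗, and let δ ∈ (0,1), α > 0. Suppose that for at least a (1−δ/4)-fraction of h ∈ 𝓗, the conditional distribution Y|_{H=h} is (δ/4, 2α/δ)-nonuniform. Then (H,Y) is (1−δ)-far in statistical distance from every distribution (H',Z) on 𝓗 × [M] with cp(H',Z) ≤ α/(|𝓗|·M). -/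
open Finset
open scoped Classical

/-!
Let `q = min(P, P')` be the common mass of the two distributions, so that their statistical
distance is `1 - ∑ q`, and write `s h = ∑_y q(h,y) ≤ 1/|𝓗|` for its row sums. Rows where
`Y|_{H=h}` is not nonuniform contribute at most `δ/4`. On a nonuniform row with
`|𝓗| s h ≥ δ/4`, the sub-distribution `|𝓗| q(h,·)` of `Y|_{H=h}` has large collision mass;
since `∑ q² ≤ cp(H',Z)`, fewer than `δ|𝓗|/2` rows are of this kind, contributing at most `δ/2`.
Every remaining row has `s h < δ/(4|𝓗|)`, contributing at most `δ/4` in total.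
-/

def IsNonuniform {M : ℕ} (p : Fin M → ℝ) (δ β : ℝ) : Prop :=
  ∀ q : Fin M → ℝ, (∀ y, 0 ≤ q y) → (∀ y, q y ≤ p y) → (∑ y, q y) ≥ δ →
    ∑ y, (q y) ^ 2 > β / M

lemma half_sum_abs_sub_eq_one_sub_sum_min {α : Type*} [Fintype α] {p p' : α → ℝ}
    (hp : ∑ a, p a = 1) (hp' : ∑ a, p' a = 1) :
    (1 / 2 : ℝ) * ∑ a, |p a - p' a| = 1 - ∑ a, min (p a) (p' a) := by
  have habs (a : α) : |p a - p' a| = p a + p' a - 2 * min (p a) (p' a) := by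
    rw [← max_sub_min_eq_abs']
    linarith [min_add_max (p a) (p' a)]
  simp only [habs, sum_sub_distrib, sum_add_distrib, ← mul_sum, hp, hp']
  ring

lemma card_compl_le_of_le {ι : Type*} [Fintype ι] {G : Finset ι} {ε : ℝ}
    (hG : (1 - ε) * Fintype.card ι ≤ G.card) : (Gᶜ.card : ℝ) ≤ ε * Fintype.card ι := by
  rw [card_compl, Nat.cast_sub (card_le_univ G)]
  linarith

lemma sum_le_add_of_card_le {ι : Type*} [Fintype ι] [Nonempty ι] (s : ι → ℝ) (S : Finset ι)
    {a b : ℝ} (hb : 0 ≤ b) (hS : S.card ≤ a * Fintype.card ι)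
    (hs : ∀ i, s i ≤ 1 / Fintype.card ι) (hsS : ∀ i ∉ S, s i ≤ b / Fintype.card ι) :
    ∑ i, s i ≤ a + b := by
  have hN : (0 : ℝ) < Fintype.card ι := Nat.cast_pos.2 Fintype.card_pos
  have hSc : ((Sᶜ).card : ℝ) ≤ Fintype.card ι := by exact_mod_cast card_le_univ Sᶜ
  have hsum := add_le_add (sum_le_card_nsmul S s _ fun i _ => hs i)
    (sum_le_card_nsmul Sᶜ s _ fun i hi => hsS i (mem_compl.1 hi))
  rw [sum_add_sum_compl, nsmul_eq_mul, nsmul_eq_mul] at hsum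
  calc ∑ i, s i ≤ S.card * (1 / Fintype.card ι) + Fintype.card ι * (b / Fintype.card ι) :=
        hsum.trans (add_le_add le_rfl (mul_le_mul_of_nonneg_right hSc (div_nonneg hb hN.le)))
    _ ≤ a + b := by
        rw [mul_one_div, mul_div_cancel₀ _ hN.ne', add_le_add_iff_right, div_le_iff₀ hN]
        exact hS

lemma IsNonuniform.div_div_sq_lt_sum_sq {M : ℕ} {p q : Fin M → ℝ} {c δ β : ℝ}
    (hp : IsNonuniform (fun y => c * p y) δ β) (hc : 0 < c) (hq0 : ∀ y, 0 ≤ q y)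
    (hqp : ∀ y, q y ≤ p y) (hδ : δ ≤ c * ∑ y, q y) :
    β / M / c ^ 2 < ∑ y, (q y) ^ 2 := by
  have h := hp (fun y => c * q y) (fun y => mul_nonneg hc.le (hq0 y))
    (fun y => mul_le_mul_of_nonneg_left (hqp y) hc.le) (by rwa [← mul_sum])
  simp only [mul_pow, ← mul_sum] at h
  rw [div_lt_iff₀ (by positivity)]
  linarith

lemma card_mul_le_of_isNonuniform {ι : Type*} [Fintype ι] [Nonempty ι] {M : ℕ} (hM : 0 < M)
    (p q : ι × Fin M → ℝ) (hq0 : ∀ z, 0 ≤ q z) (hqp : ∀ z, q z ≤ p z) {δ β C : ℝ}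
    (hcp : ∑ z, (q z) ^ 2 ≤ C / (Fintype.card ι * M)) (S : Finset ι)
    (hS : ∀ h ∈ S, IsNonuniform (fun y => Fintype.card ι * p (h, y)) δ β ∧
      δ ≤ Fintype.card ι * ∑ y, q (h, y)) :
    S.card * β ≤ C * Fintype.card ι := by
  set N : ℝ := (Fintype.card ι : ℝ)
  have hN : 0 < N := Nat.cast_pos.2 Fintype.card_pos
  have hM' : (0 : ℝ) < M := by exact_mod_cast hM
  have hrow (h : ι) (hh : h ∈ S) : β / M / N ^ 2 < ∑ y, (q (h, y)) ^ 2 :=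
    (hS h hh).1.div_div_sq_lt_sum_sq hN (fun y => hq0 _) (fun y => hqp _) (hS h hh).2
  have hsum : S.card * (β / M / N ^ 2) ≤ ∑ z, (q z) ^ 2 := by
    rw [Fintype.sum_prod_type, ← nsmul_eq_mul]
    exact (card_nsmul_le_sum S _ _ fun h hh => (hrow h hh).le).trans
      (sum_le_univ_sum_of_nonneg fun h => sum_nonneg fun y _ => sq_nonneg _)
  calc (S.card : ℝ) * β = S.card * (β / M / N ^ 2) * (M * N ^ 2) := by field_simp
    _ ≤ C / (N * M) * (M * N ^ 2) := by gcongr; linarith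
    _ = C * N := by field_simp

theorem stmt18_general {M : ℕ} {Hfam : Type} [Fintype Hfam] [Nonempty Hfam]
    (δ α : ℝ) (hδ0 : 0 < δ) (hα : 0 < α)
    (P : Hfam × Fin M → ℝ) (hP0 : ∀ z, 0 ≤ P z) (hP1 : ∑ z, P z = 1)
    -- the marginal of `H` is uniform over `𝓗`
    (hmarg : ∀ hh : Hfam, ∑ y : Fin M, P (hh, y) = 1 / Fintype.card Hfam)
    -- for at least a `(1-δ/4)`-fraction of `h`, `Y|_{H=h}` (with mass function
    -- `y ↦ |𝓗|·P(h,y)`) is `(δ/4, 2α/δ)`-nonuniform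
    (hfrac : (1 - δ / 4) * Fintype.card Hfam ≤
      ((Finset.univ : Finset Hfam).filter (fun hh =>
        ∀ q : Fin M → ℝ, (∀ y, 0 ≤ q y) →
          (∀ y, q y ≤ Fintype.card Hfam * P (hh, y)) →
          (∑ y, q y) ≥ δ / 4 →
          ∑ y, (q y) ^ 2 > (2 * α / δ) / M)).card)
    (P' : Hfam × Fin M → ℝ) (hP'0 : ∀ z, 0 ≤ P' z) (hP'1 : ∑ z, P' z = 1)
    (hP'cp : ∑ z, (P' z) ^ 2 ≤ α / (Fintype.card Hfam * M)) :
    (1 / 2 : ℝ) * ∑ z, |P z - P' z| ≥ 1 - δ := by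
  set N : ℝ := (Fintype.card Hfam : ℝ)
  have hN : 0 < N := Nat.cast_pos.2 Fintype.card_pos
  have hM : 0 < M := Nat.pos_of_ne_zero fun hM0 => by subst hM0; simp at hP1
  set q : Hfam × Fin M → ℝ := fun z => min (P z) (P' z)
  have hq0 (z) : 0 ≤ q z := le_min (hP0 z) (hP'0 z)
  have hrow (h : Hfam) : ∑ y, q (h, y) ≤ 1 / N :=
    (sum_le_sum fun y _ => min_le_left _ _).trans (hmarg h).le
  set G := univ.filter fun h => IsNonuniform (fun y => N * P (h, y)) (δ / 4) (2 * α / δ)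
  set Heavy := G.filter fun h => δ / 4 ≤ N * ∑ y, q (h, y)
  have hbad : (Gᶜ.card : ℝ) ≤ δ / 4 * N := card_compl_le_of_le hfrac
  have hheavy : (Heavy.card : ℝ) ≤ δ / 2 * N := by
    have hcp : ∑ z, (q z) ^ 2 ≤ α / (N * M) :=
      (sum_le_sum fun z _ => pow_le_pow_left₀ (hq0 z) (min_le_right _ _) 2).trans hP'cp
    have := card_mul_le_of_isNonuniform hM P q hq0 (fun z => min_le_left _ _) hcp Heavy
      fun h hh => ⟨(mem_filter.1 (mem_filter.1 hh).1).2, (mem_filter.1 hh).2⟩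
    rw [mul_div_assoc', div_le_iff₀ hδ0] at this
    nlinarith
  have hexceptional : ((Gᶜ ∪ Heavy).card : ℝ) ≤ 3 * δ / 4 * N := by
    refine (Nat.cast_le.2 (card_union_le _ _)).trans ?_
    push_cast
    linarith
  have hlight (h : Hfam) (hh : h ∉ Gᶜ ∪ Heavy) : ∑ y, q (h, y) ≤ δ / 4 / N := by
    simp only [mem_union, mem_compl, not_or, not_not, Heavy, mem_filter, not_and, not_le] at hh
    rw [le_div_iff₀ hN]
    linarith [hh.2 hh.1]
  rw [ge_iff_le, half_sum_abs_sub_eq_one_sub_sum_min hP1 hP'1, Fintype.sum_prod_type]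
  linarith [sum_le_add_of_card_le _ _ (by positivity) hexceptional hrow hlight]

/-- Lemma: nonuniformity implies far from small collision
probability, joint version: if the marginal of `H` is uniform on `𝓗` and for
at least a `(1-δ/4)`-fraction of `h ∈ 𝓗` the conditional distribution
`Y|_{H=h}` is `(δ/4, 2α/δ)`-nonuniform, then `(H,Y)` is `(1-δ)`-far from every
distribution `(H',Z)` with `cp(H',Z) ≤ α/(|𝓗|·M)`. -/
theorem stmt18 {M : ℕ} {Hfam : Type} [Fintype Hfam] [Nonempty Hfam]
    (δ α : ℝ) (hδ0 : 0 < δ) (hδ1 : δ < 1) (hα : 0 < α)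
    (P : Hfam × Fin M → ℝ) (hP0 : ∀ z, 0 ≤ P z) (hP1 : ∑ z, P z = 1)
    -- the marginal of `H` is uniform over `𝓗`
    (hmarg : ∀ hh : Hfam, ∑ y : Fin M, P (hh, y) = 1 / Fintype.card Hfam)
    -- for at least a `(1-δ/4)`-fraction of `h`, `Y|_{H=h}` (with mass function
    -- `y ↦ |𝓗|·P(h,y)`) is `(δ/4, 2α/δ)`-nonuniform
    (hfrac : (1 - δ / 4) * Fintype.card Hfam ≤
      ((Finset.univ : Finset Hfam).filter (fun hh =>
        ∀ q : Fin M → ℝ, (∀ y, 0 ≤ q y) →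
          (∀ y, q y ≤ Fintype.card Hfam * P (hh, y)) →
          (∑ y, q y) ≥ δ / 4 →
          ∑ y, (q y) ^ 2 > (2 * α / δ) / M)).card)
    (P' : Hfam × Fin M → ℝ) (hP'0 : ∀ z, 0 ≤ P' z) (hP'1 : ∑ z, P' z = 1)
    (hP'cp : ∑ z, (P' z) ^ 2 ≤ α / (Fintype.card Hfam * M)) :
    (1 / 2 : ℝ) * ∑ z, |P z - P' z| ≥ 1 - δ :=
  stmt18_general δ α hδ0 hα P hP0 hP1 hmarg hfrac P' hP'0 hP'1 hP'cp
end
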